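/- arXiv:2304.06629 — 7 statements merged into one kernel-verified Lean document; each statement's English description precedes it below -/
import Mathlib

section
/- For every integer partition λ, the number of colored permutations of shape λ equals the principal lower hook product of λ at α = 1, i.e. |S_λ| = Π_{j=1}^{λ₁} ((λ₁ − j) + λ′_j). -/
open Finset

/-- The conjugate partition: `conjP L j = λ′_j = #{i : λ_i ≥ j}`. -/
def conjP (L : List ℕ) (j : ℕ) : ℕ := (L.filter (fun p => decide (j ≤ p))).length

/-- `L` is the list of parts of an integer partition (weakly decreasing, positive parts). -/
def IsPartition (L : List ℕ) : Prop := L.Pairwise (· ≥ ·) ∧ ∀ p ∈ L, 0 < p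

/-- Colored permutations of shape `L`: a coloring `c` of the symbols `1,…,λ₁` (represented by
`Fin λ₁`, symbol `i` being `i.1 + 1`) with `1 ≤ c i ≤ λ′_i`, together with a permutation whose
cycles are monochromatic. -/
def ColoredPerms (L : List ℕ) :
    Set ((Fin L.headI → ℕ) × Equiv.Perm (Fin L.headI)) :=
  {x | (∀ i, 1 ≤ x.1 i ∧ x.1 i ≤ conjP L (i.1 + 1)) ∧ ∀ i, x.1 (x.2 i) = x.1 i}

/-- Colored derangements of shape `L`: colored permutations such that `σ i = i → c i ≠ 1`. -/
def ColoredDerangements (L : List ℕ) :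
    Set ((Fin L.headI → ℕ) × Equiv.Perm (Fin L.headI)) :=
  {x | x ∈ ColoredPerms L ∧ ∀ i, x.2 i = i → x.1 i ≠ 1}

/-- Number of cycles of a permutation in its disjoint cycle decomposition,
fixed points counting as cycles. -/
noncomputable def cycleCount {m : ℕ} (σ : Equiv.Perm (Fin m)) : ℕ :=
  σ.cycleType.card + (Finset.univ.filter fun i => σ i = i).card

/-- `dCount L k` : the number `d^λ_k` of colored derangements of shape `L`
whose permutation has exactly `k` cycles. -/
noncomputable def dCount (L : List ℕ) (k : ℕ) : ℕ :=
  Set.ncard {x | x ∈ ColoredDerangements L ∧ cycleCount x.2 = k}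

/-- The λ-Jack derangement number `D^λ_α = Σ_{k=1}^{λ₁} d^λ_k α^{λ₁−k}`. -/
noncomputable def JackD (L : List ℕ) (α : ℝ) : ℝ :=
  ∑ k ∈ Finset.Icc 1 L.headI, (dCount L k : ℝ) * α ^ (L.headI - k)

/-- Block (0-based) of a point of `{1,…,2m}` (points represented by `Fin (2m)`,
point `p` being `p.1 + 1`; the block of `p` is `k` iff `p ∈ {2k−1, 2k}` 1-based). -/
def blk {m : ℕ} (p : Fin (2 * m)) : Fin m := ⟨p.1 / 2, by have := p.2; omega⟩

/-- Colored perfect matchings of shape `L`: a perfect matching of `{1,…,2λ₁}` (a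
fixed-point-free involution) together with a coloring `c` of the blocks `{2k−1,2k}` with
`1 ≤ c_k ≤ λ′_k`, such that matched points lie in blocks of the same color. -/
def ColoredMatchings (L : List ℕ) :
    Set ((Fin L.headI → ℕ) × Equiv.Perm (Fin (2 * L.headI))) :=
  {x | Function.Involutive x.2 ∧ (∀ p, x.2 p ≠ p) ∧
        (∀ k, 1 ≤ x.1 k ∧ x.1 k ≤ conjP L (k.1 + 1)) ∧
        (∀ p, x.1 (blk (x.2 p)) = x.1 (blk p))}

/-- Colored perfect matching derangements of shape `L`: colored perfect matchings such that
whenever a block `{2k−1,2k}` is itself a pair of the matching, its color is not `1`. -/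
def ColoredMatchDerangements (L : List ℕ) :
    Set ((Fin L.headI → ℕ) × Equiv.Perm (Fin (2 * L.headI))) :=
  {x | x ∈ ColoredMatchings L ∧ ∀ p, blk (x.2 p) = blk p → x.1 (blk p) ≠ 1}

/-- The principal lower hook length `h_j = α(λ₁ − j) + λ′_j` of the cell `(1,j)`. -/
noncomputable def hlow (L : List ℕ) (α : ℝ) (j : ℕ) : ℝ :=
  α * ((L.headI : ℝ) - (j : ℝ)) + (conjP L j : ℝ)

/-- `fixPtCount m k` : the number `d_{m,k}` of permutations of `{1,…,m}` with exactly
`k` fixed points. -/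
noncomputable def fixPtCount (m k : ℕ) : ℕ :=
  Set.ncard {σ : Equiv.Perm (Fin m) | (Finset.univ.filter fun i => σ i = i).card = k}

/-- `Ematch m` : the number of perfect matchings of `{1,…,2m}` containing none of the base
pairs `{2t−1, 2t}`. -/
noncomputable def Ematch (m : ℕ) : ℕ :=
  Set.ncard {σ : Equiv.Perm (Fin (2 * m)) |
    Function.Involutive σ ∧ (∀ p, σ p ≠ p) ∧ ∀ p, (σ p).1 / 2 ≠ p.1 / 2}


/-!
Allow the color of the symbol `i` to be bounded by any antitone function `b` of `i + 1`
(for `S_λ`, `b = λ′`). Remove the symbol `0` from a colored permutation of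
`{0, …, n}`. Either `0` was a fixed point, whose color is any of `1, …, b 1`, or it sat in a
cycle just before some symbol `q + 1`, whose color it had to share; since `b` is antitone that
color is automatically at most `b 1`. So the colored permutations of `{0, …, n}` correspond to
pairs consisting of one of these `b 1 + n` choices and a colored permutation of the remaining
`n` symbols with the shifted bound `j ↦ b (j + 1)`, and the product formula follows by
induction.
-/

open Equiv Equiv.Perm

def boundedColoredPerms (m : ℕ) (b : ℕ → ℕ) : Set ((Fin m → ℕ) × Perm (Fin m)) :=
  {x | (∀ i, 1 ≤ x.1 i ∧ x.1 i ≤ b (i.1 + 1)) ∧ ∀ i, x.1 (x.2 i) = x.1 i}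

section

variable {n : ℕ} {b : ℕ → ℕ}

theorem cons_mem_boundedColoredPerms_iff {c₀ : ℕ} {c : Fin n → ℕ} {p : Fin (n + 1)}
    {e : Perm (Fin n)} :
    (Fin.cons c₀ c, decomposeFin.symm (p, e)) ∈ boundedColoredPerms (n + 1) b ↔
      (1 ≤ c₀ ∧ c₀ ≤ b 1) ∧ (Fin.cons c₀ c : Fin (n + 1) → ℕ) p = c₀ ∧
        (c, e) ∈ boundedColoredPerms n (fun j => b (j + 1)) := by
  simp only [boundedColoredPerms, Set.mem_ofPred_eq, Fin.forall_fin_succ,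
    decomposeFin_symm_apply_zero, decomposeFin_symm_apply_succ, Fin.cons_zero, Fin.cons_succ,
    Fin.val_zero, Fin.val_succ, zero_add]
  constructor
  · rintro ⟨⟨hc₀, hc⟩, hp, he⟩
    refine ⟨hc₀, hp, hc, fun j => ?_⟩
    rw [← he j, apply_swap_eq_self (v := Fin.cons c₀ c) (i := 0) hp.symm, Fin.cons_succ]
  · rintro ⟨hc₀, hp, hc, he⟩
    refine ⟨⟨hc₀, hc⟩, hp, fun j => ?_⟩
    rw [apply_swap_eq_self (v := Fin.cons c₀ c) (i := 0) hp.symm, Fin.cons_succ, he]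

/-- `inl a` makes `0` a fixed point of color `a + 1`; `inr q` puts `0` into the cycle of
`q.succ`, just before it, with its color. -/
def insertZero {k : ℕ} (t : Fin k ⊕ Fin n) (x : (Fin n → ℕ) × Perm (Fin n)) :
    (Fin (n + 1) → ℕ) × Perm (Fin (n + 1)) :=
  (Fin.cons (t.elim (fun a => a.1 + 1) x.1) x.1,
    decomposeFin.symm (t.elim (fun _ => 0) Fin.succ, x.2))

theorem insertZero_injective {k : ℕ} :
    Function.Injective (Function.uncurry (insertZero (k := k) (n := n))) := by
  rintro ⟨t, c, e⟩ ⟨t', c', e'⟩ h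
  simp only [Function.uncurry_apply_pair, insertZero, Prod.mk.injEq, Fin.cons_inj,
    EmbeddingLike.apply_eq_iff_eq] at h
  obtain ⟨⟨hc₀, rfl⟩, hp, rfl⟩ := h
  cases t <;> cases t' <;> simp_all [Fin.ext_iff]

theorem insertZero_mem_boundedColoredPerms (hb : Antitone b) (t : Fin (b 1) ⊕ Fin n)
    {x : (Fin n → ℕ) × Perm (Fin n)} (hx : x ∈ boundedColoredPerms n (fun j => b (j + 1))) :
    insertZero t x ∈ boundedColoredPerms (n + 1) b := by
  refine cons_mem_boundedColoredPerms_iff.mpr ⟨?_, ?_, hx⟩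
  · rcases t with a | q
    · exact ⟨Nat.le_add_left _ _, a.2⟩
    · exact ⟨(hx.1 q).1, (hx.1 q).2.trans (hb (by omega))⟩
  · rcases t with a | q <;> rfl

theorem boundedColoredPerms_subset_image_insertZero :
    boundedColoredPerms (n + 1) b ⊆ Function.uncurry insertZero ''
      (Set.univ (α := Fin (b 1) ⊕ Fin n) ×ˢ boundedColoredPerms n (fun j => b (j + 1))) := by
  rintro ⟨c, σ⟩ h
  obtain ⟨⟨p, e⟩, rfl⟩ := decomposeFin.symm.surjective σ
  rw [← Fin.cons_self_tail c] at h ⊢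
  generalize c 0 = c₀, Fin.tail c = c at h ⊢
  obtain ⟨⟨hc₀, hc₀b⟩, hp, hx⟩ := cons_mem_boundedColoredPerms_iff.mp h
  induction p using Fin.cases with
  | zero =>
    refine ⟨(Sum.inl ⟨c₀ - 1, by omega⟩, c, e), ⟨trivial, hx⟩, ?_⟩
    simp only [Function.uncurry_apply_pair, insertZero, Sum.elim_inl]
    congr
    omega
  | succ q =>
    refine ⟨(Sum.inr q, c, e), ⟨trivial, hx⟩, ?_⟩
    simp only [Function.uncurry_apply_pair, insertZero, Sum.elim_inr]
    rw [Fin.cons_succ] at hp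
    rw [hp]

theorem image_insertZero (hb : Antitone b) :
    Function.uncurry insertZero ''
      (Set.univ (α := Fin (b 1) ⊕ Fin n) ×ˢ boundedColoredPerms n (fun j => b (j + 1))) =
      boundedColoredPerms (n + 1) b := by
  refine subset_antisymm ?_ boundedColoredPerms_subset_image_insertZero
  rintro _ ⟨⟨t, x⟩, ⟨-, hx⟩, rfl⟩
  exact insertZero_mem_boundedColoredPerms hb t hx

theorem ncard_boundedColoredPerms_succ (hb : Antitone b) :
    (boundedColoredPerms (n + 1) b).ncard =
      (b 1 + n) * (boundedColoredPerms n (fun j => b (j + 1))).ncard := by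
  rw [← image_insertZero hb, Set.ncard_image_of_injective _ insertZero_injective,
    Set.ncard_prod, Set.ncard_univ, Nat.card_eq_fintype_card, Fintype.card_sum,
    Fintype.card_fin, Fintype.card_fin]

end

theorem prod_Icc_one_succ {M : Type*} [CommMonoid M] (f : ℕ → M) (n : ℕ) :
    ∏ j ∈ Icc 1 (n + 1), f j = f 1 * ∏ j ∈ Icc 1 n, f (j + 1) := by
  rw [← mul_prod_Ioc_eq_prod_Icc (by omega), ← Icc_add_one_left_eq_Ioc, ← map_add_right_Icc,
    prod_map]
  rfl

theorem ncard_boundedColoredPerms (m : ℕ) {b : ℕ → ℕ} (hb : Antitone b) :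
    (boundedColoredPerms m b).ncard = ∏ j ∈ Icc 1 m, ((m - j) + b j) := by
  induction m generalizing b with
  | zero => simp [boundedColoredPerms]
  | succ n ih =>
    have hb' : Antitone fun j => b (j + 1) := fun _ _ h => hb (by omega)
    rw [ncard_boundedColoredPerms_succ hb, ih hb', prod_Icc_one_succ,
      Nat.add_sub_cancel, Nat.add_comm n]
    congr 1
    refine prod_congr rfl fun j _ => ?_
    congr 1
    omega

theorem conjP_antitone (L : List ℕ) : Antitone (conjP L) := fun _ _ hij =>
  (List.monotone_filter_right L fun _ ha => by
    simp only [decide_eq_true_eq] at ha ⊢; omega).length_le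

theorem coloredPerms_card_general (L : List ℕ) :
    (ColoredPerms L).ncard =
      ∏ j ∈ Finset.Icc 1 L.headI, ((L.headI - j) + conjP L j) :=
  ncard_boundedColoredPerms L.headI (conjP_antitone L)

/-- `|S_λ| = Π_{j=1}^{λ₁} ((λ₁ − j) + λ′_j)`. -/
theorem coloredPerms_card (L : List ℕ) (hL : IsPartition L) :
    (ColoredPerms L).ncard =
      ∏ j ∈ Finset.Icc 1 L.headI, ((L.headI - j) + conjP L j) :=
  coloredPerms_card_general L
end

section
/- For every integer partition λ, the number of colored perfect matching derangements of shape λ equals the λ-Jack derangement number at α = 2: |D′_λ| = Σ_{k=1}^{λ₁} d^λ_k · 2^{λ₁−k}. -/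
open Finset

/-!
Encode a colored derangement `(c, σ)` of shape `λ`, together with a side `f k : Bool` for every
block `k = {2k-1, 2k}`, as the colored perfect matching that pairs the point `(k, f k)` of block `k`
with the point `(σ k, !f (σ k))` of block `σ k`. A block is a pair of the matching iff `σ` fixes it,
and `c` is constant on cycles of `σ` iff matched blocks have the same colour, so derangements
correspond to derangements. The matching determines `(σ, f)` up to one binary choice
per cycle of `σ`; requiring `f = false` at the least block of every cycle makes the encoding a
bijection. Hence `|D′_λ| = ∑_{(c,σ)} 2^(λ₁ - #cycles σ)`, and grouping by the number of cycles gives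
the claim.
-/

open Function

namespace Equiv.Perm

lemma sameCycle_iff_exists_of_semiconj {α β : Type*} [Finite α] [Finite β] {U : Perm α}
    {σ : Perm β} {g : β → α} {k : β} (h : ∀ k, U (g k) = g (σ k)) {q : α} :
    U.SameCycle (g k) q ↔ ∃ j, σ.SameCycle k j ∧ g j = q := by
  have hpow (n : ℕ) : (U ^ n) (g k) = g ((σ ^ n) k) := by
    simp only [coe_pow]
    exact ((Semiconj.iterate_right (fun j => (h j).symm) n) k).symm
  constructor
  · intro hq
    obtain ⟨n, rfl⟩ := hq.exists_nat_pow_eq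
    exact ⟨(σ ^ n) k, sameCycle_pow_right.2 (SameCycle.refl _ _), (hpow n).symm⟩
  · rintro ⟨j, hkj, rfl⟩
    obtain ⟨n, rfl⟩ := hkj.exists_nat_pow_eq
    exact ⟨n, by rw [zpow_natCast, hpow]⟩

variable {β : Type*} [LinearOrder β] {σ : Perm β} {k l : β}

def IsCycleMin (σ : Perm β) (k : β) : Prop := ∀ j, σ.SameCycle k j → k ≤ j

lemma isCycleMin_of_apply_eq_self (h : σ k = k) : IsCycleMin σ k :=
  fun _ hj => (hj.eq_of_left h).le

lemma IsCycleMin.eq_of_sameCycle (hk : IsCycleMin σ k) (hl : IsCycleMin σ l)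
    (h : σ.SameCycle k l) : k = l :=
  le_antisymm (hk l h) (hl k h.symm)

variable [Fintype β]

instance (σ : Perm β) : DecidablePred (IsCycleMin σ) := fun _ => Fintype.decidableForallFintype

lemma exists_isCycleMin_sameCycle (σ : Perm β) (k : β) :
    ∃ t, IsCycleMin σ t ∧ σ.SameCycle k t := by
  obtain ⟨t, hkt, hmin⟩ := exists_min_image {j | σ.SameCycle k j} id ⟨k, by simp [SameCycle.refl]⟩
  rw [mem_filter_univ] at hkt
  exact ⟨t, fun j htj => hmin j (by simpa using hkt.trans htj), hkt⟩

lemma card_isCycleMin (σ : Perm β) :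
    #{k | IsCycleMin σ k} = σ.cycleType.card + #{k | σ k = k} := by
  rw [← card_filter_add_card_filter_not (s := {k | IsCycleMin σ k}) (· ∈ σ.support),
    filter_filter, filter_filter]
  congr 1
  · rw [cycleType_def, Multiset.card_map, ← Finset.card_def]
    refine card_nbij σ.cycleOf (fun k hk => ?_) (fun k hk l hl h => ?_) fun γ hγ => ?_
    · exact cycleOf_mem_cycleFactorsFinset_iff.2 (mem_filter.1 hk).2.2
    · simp only [coe_filter, Set.mem_ofPred_eq, mem_univ, true_and] at hk hl
      exact hk.1.eq_of_sameCycle hl.1 ((sameCycle_iff_cycleOf_eq_of_mem_support hk.2 hl.2).2 h)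
    · obtain ⟨a, ha⟩ := (mem_cycleFactorsFinset_iff.1 hγ).1.nonempty_support
      obtain ⟨t, ht, hat⟩ := exists_isCycleMin_sameCycle σ a
      have haσ : a ∈ σ.support := mem_cycleFactorsFinset_support_le hγ ha
      refine ⟨t, by simpa [ht] using hat.mem_support_iff.1 haσ, ?_⟩
      rw [cycle_is_cycleOf ha hγ, hat.cycleOf_eq]
  · congr 1
    ext k
    simp only [mem_filter_univ, mem_support, ne_eq, not_not, and_iff_right_iff_imp]
    exact isCycleMin_of_apply_eq_self

end Equiv.Perm

namespace BlockMatching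

open Equiv Equiv.Perm

variable {β : Type*}

def IsPerfectMatching {α : Type*} (M : Perm α) : Prop := Involutive M ∧ ∀ p, M p ≠ p

lemma IsPerfectMatching.permCongr {α α' : Type*} {M : Perm α} (hM : IsPerfectMatching M)
    (e : α ≃ α') : IsPerfectMatching (e.permCongr M) :=
  ⟨fun p => by simp [hM.1 _], fun p h => hM.2 (e.symm p) (e.eq_symm_apply.2 h)⟩

def flipSide : Perm (β × Bool) := prodCongr (Equiv.refl β) boolNot

@[simp] lemma flipSide_apply (p : β × Bool) : flipSide p = (p.1, !p.2) := rfl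

lemma forall_sides_iff {P : β × Bool → Prop} (f : β → Bool) :
    (∀ p, P p) ↔ ∀ k, P (k, f k) ∧ P (k, !f k) := by
  refine ⟨fun h k => ⟨h _, h _⟩, fun h ⟨k, b⟩ => ?_⟩
  obtain rfl | rfl := Bool.eq_or_eq_not b (f k)
  exacts [(h k).1, (h k).2]

section Matching

variable (σ : Perm β) (f : β → Bool)

/-- `(k, f k)` is the out-point of block `k`; it is matched with the in-point of block `σ k`. -/
def matchingFun (p : β × Bool) : β × Bool :=
  if p.2 = f p.1 then (σ p.1, !f (σ p.1)) else (σ⁻¹ p.1, f (σ⁻¹ p.1))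

lemma matchingFun_self (k : β) : matchingFun σ f (k, f k) = (σ k, !f (σ k)) := if_pos rfl

lemma matchingFun_not (k : β) : matchingFun σ f (k, !f k) = (σ⁻¹ k, f (σ⁻¹ k)) :=
  if_neg (by simp)

lemma involutive_matchingFun : Involutive (matchingFun σ f) :=
  (forall_sides_iff f).2 fun k => ⟨by simp [matchingFun_self, matchingFun_not],
    by simp [matchingFun_self, matchingFun_not]⟩

def matching : Perm (β × Bool) := (involutive_matchingFun σ f).toPerm

@[simp] lemma matching_self (k : β) : matching σ f (k, f k) = (σ k, !f (σ k)) :=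
  matchingFun_self σ f k

@[simp] lemma matching_not (k : β) : matching σ f (k, !f k) = (σ⁻¹ k, f (σ⁻¹ k)) :=
  matchingFun_not σ f k

lemma isPerfectMatching_matching : IsPerfectMatching (matching σ f) :=
  ⟨involutive_matchingFun σ f, (forall_sides_iff f).2 fun k => by
    constructor <;> intro h <;> simp only [matching_self, matching_not, Prod.mk.injEq] at h
    all_goals obtain ⟨h1, h2⟩ := h; rw [h1] at h2; simp at h2⟩

lemma forall_color_matching_iff {γ : Type*} (c : β → γ) :
    (∀ p, c (matching σ f p).1 = c p.1) ↔ ∀ k, c (σ k) = c k := by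
  rw [forall_sides_iff f]
  simp only [matching_self, matching_not]
  refine ⟨fun h k => (h k).1, fun h k => ⟨h k, ?_⟩⟩
  simpa using (h (σ⁻¹ k)).symm

lemma forall_fixed_matching_iff (P : β → Prop) :
    (∀ p, (matching σ f p).1 = p.1 → P p.1) ↔ ∀ k, σ k = k → P k := by
  rw [forall_sides_iff f]
  simp only [matching_self, matching_not, Perm.inv_eq_iff_eq]
  exact ⟨fun h k => (h k).1, fun h k => ⟨h k, fun hk => h k hk.symm⟩⟩

end Matching

section Walk

variable {M : Perm (β × Bool)}

def walk (M : Perm (β × Bool)) : Perm (β × Bool) := flipSide * M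

@[simp] lemma walk_apply (p : β × Bool) : walk M p = ((M p).1, !(M p).2) := rfl

lemma walk_zpow_flipSide (hM : Involutive M) (i : ℤ) (p : β × Bool) :
    (walk M ^ i) (flipSide p) = flipSide ((walk M ^ (-i)) p) := by
  have hinv : (walk M)⁻¹ = M * flipSide := by
    rw [walk, mul_inv_rev, Equiv.ext fun p => Perm.inv_eq_iff_eq.2 (hM p).symm]
    rfl
  have h : SemiconjBy flipSide (walk M)⁻¹ (walk M) := by
    rw [hinv, walk, SemiconjBy, mul_assoc]
  have := congrArg (· p) (h.zpow_right i)
  simpa [inv_zpow'] using this.symm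

lemma flipSide_sameCycle_walk (hM : Involutive M) {p q : β × Bool}
    (h : (walk M).SameCycle p q) : (walk M).SameCycle (flipSide p) (flipSide q) :=
  let ⟨i, hi⟩ := h
  ⟨-i, by rw [walk_zpow_flipSide hM, neg_neg, hi]⟩

/-- If `walk M ^ i` sends `p` to `flipSide p`, then `q = (walk M ^ (i / 2)) p` satisfies
`flipSide q = (walk M ^ (i % 2)) q`, so `q` is a fixed point of `flipSide` or of `M`. -/
lemma not_sameCycle_walk_flipSide (hM : IsPerfectMatching M) (p : β × Bool) :
    ¬ (walk M).SameCycle p (flipSide p) := by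
  rintro ⟨i, hi⟩
  have key (j : ℤ) : flipSide ((walk M ^ j) p) = (walk M ^ (i - j)) p := by
    rw [← neg_neg j, ← walk_zpow_flipSide hM.1, ← hi, ← Perm.mul_apply, ← zpow_add]
    ring_nf
  obtain ⟨j, rfl | rfl⟩ := Int.even_or_odd' i
  · have := key j
    rw [show 2 * j - j = j by ring] at this
    simp [Prod.ext_iff] at this
  · have := key j
    rw [show 2 * j + 1 - j = 1 + j by ring, zpow_one_add, Perm.mul_apply] at this
    simp only [flipSide_apply, walk_apply, Prod.mk.injEq, Bool.not_inj_iff] at this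
    exact hM.2 _ (Prod.ext this.1.symm this.2.symm)

lemma walk_matching_self (σ : Perm β) (f : β → Bool) (k : β) :
    walk (matching σ f) (k, f k) = (σ k, f (σ k)) := by
  simp

end Walk

section Decoding

variable [LinearOrder β] {M : Perm (β × Bool)}

/-- The orbits of `walk M` come in pairs exchanged by `flipSide`, each meeting every block of a
cycle of blocks exactly once; the out-points are those on the orbit through `(t, false)`, where `t`
is the least block of the cycle. -/
def IsOutPoint (M : Perm (β × Bool)) (p : β × Bool) : Prop :=
  ∃ t, (walk M).SameCycle p (t, false) ∧ ∀ q, (walk M).SameCycle p q → t ≤ q.1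

lemma not_isOutPoint_false_and_true (hM : IsPerfectMatching M) (k : β) :
    ¬ (IsOutPoint M (k, false) ∧ IsOutPoint M (k, true)) := by
  rintro ⟨⟨t, ht, hmin⟩, ⟨t', ht', hmin'⟩⟩
  have htt' : t = t' := le_antisymm (hmin _ (by simpa using flipSide_sameCycle_walk hM.1 ht'))
    (hmin' _ (by simpa using flipSide_sameCycle_walk hM.1 ht))
  subst htt'
  exact not_sameCycle_walk_flipSide hM (k, false) (ht.trans ht'.symm)

lemma IsOutPoint.of_sameCycle {p q : β × Bool} (hp : IsOutPoint M p)
    (h : (walk M).SameCycle p q) : IsOutPoint M q :=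
  let ⟨t, ht, hmin⟩ := hp
  ⟨t, h.symm.trans ht, fun r hr => hmin r (h.trans hr)⟩

variable [Fintype β]

lemma isOutPoint_false_or_true (hM : Involutive M) (k : β) :
    IsOutPoint M (k, false) ∨ IsOutPoint M (k, true) := by
  obtain ⟨⟨t, b⟩, hkt, hmin⟩ := exists_min_image {q | (walk M).SameCycle (k, false) q} Prod.fst
    ⟨(k, false), by simp [SameCycle.refl]⟩
  rw [mem_filter_univ] at hkt
  cases b
  · exact .inl ⟨t, hkt, fun q hq => hmin q (by simpa using hq)⟩
  · refine .inr ⟨t, by simpa using flipSide_sameCycle_walk hM hkt, fun q hq => ?_⟩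
    simpa using hmin (flipSide q) (by simpa using flipSide_sameCycle_walk hM hq)

open Classical in
noncomputable def outColor (M : Perm (β × Bool)) (k : β) : Bool := decide (IsOutPoint M (k, true))

lemma isOutPoint_iff (hM : IsPerfectMatching M) {k : β} {b : Bool} :
    IsOutPoint M (k, b) ↔ b = outColor M k := by
  cases b
  · have hor := isOutPoint_false_or_true hM.1 k
    have hnand := not_isOutPoint_false_and_true hM k
    simp only [outColor, Bool.false_eq, decide_eq_false_iff_not]
    tauto
  · simp [outColor]

lemma snd_walk_out (hM : IsPerfectMatching M) (k : β) :
    (walk M (k, outColor M k)).2 = outColor M (walk M (k, outColor M k)).1 :=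
  (isOutPoint_iff hM).1 <|
    ((isOutPoint_iff hM).2 rfl).of_sameCycle (sameCycle_apply_right.2 (SameCycle.refl _ _))

lemma injective_walk_out (hM : IsPerfectMatching M) :
    Injective fun k => (walk M (k, outColor M k)).1 := by
  intro k l (h : (walk M (k, outColor M k)).1 = (walk M (l, outColor M l)).1)
  have hsnd := snd_walk_out hM k
  rw [h, ← snd_walk_out hM l] at hsnd
  exact congrArg Prod.fst ((walk M).injective (Prod.ext h hsnd))

noncomputable def outPerm (hM : IsPerfectMatching M) : Perm β :=
  Equiv.ofBijective _ (Finite.injective_iff_bijective.1 (injective_walk_out hM))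

lemma walk_apply_out (hM : IsPerfectMatching M) (k : β) :
    walk M (k, outColor M k) = (outPerm hM k, outColor M (outPerm hM k)) :=
  Prod.ext rfl (snd_walk_out hM k)

lemma matching_outPerm (hM : IsPerfectMatching M) : matching (outPerm hM) (outColor M) = M := by
  have hout (k : β) : M (k, outColor M k) = (outPerm hM k, !outColor M (outPerm hM k)) := by
    have := walk_apply_out hM k
    simp only [walk_apply, Prod.mk.injEq] at this
    exact Prod.ext this.1 (by simp [← this.2])
  refine Equiv.ext <| (forall_sides_iff (outColor M)).2 fun k =>
    ⟨by rw [matching_self, hout], ?_⟩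
  obtain ⟨j, rfl⟩ := (outPerm hM).surjective k
  rw [matching_not, coe_inv, symm_apply_apply, ← hout, hM.1]

def Normalized (σ : Perm β) (f : β → Bool) : Prop := ∀ k, IsCycleMin σ k → f k = false

lemma normalized_outColor (hM : IsPerfectMatching M) : Normalized (outPerm hM) (outColor M) := by
  intro k hk
  obtain ⟨t, hkt, hmin⟩ := (isOutPoint_iff hM).2 (rfl : outColor M k = outColor M k)
  obtain ⟨j, hkj, hj⟩ := (sameCycle_iff_exists_of_semiconj (g := fun j => (j, outColor M j))
    (walk_apply_out hM)).1 hkt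
  obtain ⟨rfl, hj⟩ := Prod.mk.inj hj
  rwa [le_antisymm (hk j hkj) (hmin _ (SameCycle.refl _ _))]

variable {σ : Perm β} {f : β → Bool}

lemma isOutPoint_matching (hf : Normalized σ f) (k : β) :
    IsOutPoint (matching σ f) (k, f k) := by
  have horbit {k : β} {q : β × Bool} := sameCycle_iff_exists_of_semiconj (k := k) (q := q)
    (g := fun j => (j, f j)) (walk_matching_self σ f)
  obtain ⟨t, ht, hkt⟩ := exists_isCycleMin_sameCycle σ k
  refine ⟨t, ?_, fun q hq => ?_⟩
  · rw [← hf t ht]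
    exact horbit.2 ⟨t, hkt, rfl⟩
  · obtain ⟨j, hkj, rfl⟩ := horbit.1 hq
    exact ht j (hkt.symm.trans hkj)

lemma outColor_matching (hf : Normalized σ f) : outColor (matching σ f) = f :=
  funext fun k =>
    ((isOutPoint_iff (isPerfectMatching_matching σ f)).1 (isOutPoint_matching hf k)).symm

lemma outPerm_matching (hf : Normalized σ f) : outPerm (isPerfectMatching_matching σ f) = σ := by
  ext1 k
  have := walk_apply_out (isPerfectMatching_matching σ f) k
  rw [outColor_matching hf, walk_matching_self] at this
  exact (congrArg Prod.fst this).symm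

noncomputable def matchingEquiv :
    {x : Perm β × (β → Bool) // Normalized x.1 x.2} ≃ {M : Perm (β × Bool) // IsPerfectMatching M}
    where
  toFun x := ⟨matching x.1.1 x.1.2, isPerfectMatching_matching _ _⟩
  invFun M := ⟨(outPerm M.2, outColor M.1), normalized_outColor M.2⟩
  left_inv x := Subtype.ext (Prod.ext (outPerm_matching x.2) (outColor_matching x.2))
  right_inv M := Subtype.ext (matching_outPerm M.2)

lemma card_normalized (σ : Perm β) :
    Nat.card {f : β → Bool // Normalized σ f} = 2 ^ (Fintype.card β - #{k | IsCycleMin σ k}) := by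
  let t (k : β) : Finset Bool := if IsCycleMin σ k then {false} else univ
  have ht (f : β → Bool) : Normalized σ f ↔ f ∈ Fintype.piFinset t := by
    simp only [Fintype.mem_piFinset, t, Normalized]
    refine forall_congr' fun k => ?_
    split_ifs with h <;> simp [h]
  rw [Nat.card_congr (Equiv.subtypeEquivRight ht), Nat.card_eq_fintype_card, Fintype.card_coe,
    Fintype.card_piFinset]
  simp only [t, apply_ite Finset.card, card_singleton, card_univ, Fintype.card_bool]
  rw [prod_ite, prod_const_one, prod_const, one_mul, ← card_univ, ← card_filter_add_card_filter_not (s := univ) (IsCycleMin σ)]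
  simp

end Decoding

end BlockMatching

open Equiv Equiv.Perm BlockMatching

def finBlockEquiv (m : ℕ) : Fin (2 * m) ≃ Fin m × Bool :=
  (finCongr (Nat.mul_comm 2 m)).trans
    (finProdFinEquiv.symm.trans ((Equiv.refl _).prodCongr finTwoEquiv))

lemma finBlockEquiv_apply_fst {m : ℕ} (p : Fin (2 * m)) : (finBlockEquiv m p).1 = blk p := by
  ext
  simp [finBlockEquiv, blk]

lemma cycleCount_eq_card_isCycleMin {m : ℕ} (σ : Perm (Fin m)) :
    cycleCount σ = #{k | IsCycleMin σ k} := by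
  rw [card_isCycleMin]
  rfl

lemma cycleCount_mem_Icc {m : ℕ} (hm : 0 < m) (σ : Perm (Fin m)) : cycleCount σ ∈ Icc 1 m := by
  obtain ⟨t, ht, -⟩ := exists_isCycleMin_sameCycle σ ⟨0, hm⟩
  rw [cycleCount_eq_card_isCycleMin, mem_Icc]
  exact ⟨card_pos.2 ⟨t, by simpa using ht⟩, (card_filter_le _ _).trans (by simp)⟩

lemma matching_mem_coloredMatchDerangements_iff {L : List ℕ} (c : Fin L.headI → ℕ)
    (σ : Perm (Fin L.headI)) (f : Fin L.headI → Bool) :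
    (c, (finBlockEquiv _).symm.permCongr (matching σ f)) ∈ ColoredMatchDerangements L ↔
      (c, σ) ∈ ColoredDerangements L := by
  obtain ⟨hinv, hfpf⟩ := (isPerfectMatching_matching σ f).permCongr (finBlockEquiv _).symm
  simp only [ColoredMatchDerangements, ColoredMatchings, ColoredDerangements, ColoredPerms,
    Set.mem_ofPred_eq, hinv, true_and]
  simp only [← finBlockEquiv_apply_fst, permCongr_apply, symm_symm, apply_symm_apply]
  rw [(finBlockEquiv _).forall_congr_right (q := fun q => c (matching σ f q).1 = c q.1),
    (finBlockEquiv _).forall_congr_right (q := fun q => (matching σ f q).1 = q.1 → c q.1 ≠ 1),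
    forall_color_matching_iff, forall_fixed_matching_iff σ f (c · ≠ 1)]
  tauto

noncomputable def toColoredMatchDerangement (L : List ℕ) :
    (Σ x : ColoredDerangements L, {f // Normalized x.1.2 f}) → ColoredMatchDerangements L :=
  fun y => ⟨(y.1.1.1, (finBlockEquiv _).symm.permCongr (matching y.1.1.2 y.2.1)),
    (matching_mem_coloredMatchDerangements_iff _ _ _).2 y.1.2⟩

lemma bijective_toColoredMatchDerangement (L : List ℕ) :
    Bijective (toColoredMatchDerangement L) := by
  constructor
  · rintro ⟨⟨⟨c, σ⟩, hx⟩, ⟨f, hf⟩⟩ ⟨⟨⟨c', σ'⟩, hx'⟩, ⟨f', hf'⟩⟩ h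
    simp only [toColoredMatchDerangement, Subtype.mk.injEq, Prod.mk.injEq] at h
    obtain ⟨rfl, h⟩ := h
    have := matchingEquiv.injective (a₁ := ⟨(σ, f), hf⟩) (a₂ := ⟨(σ', f'), hf'⟩)
      (Subtype.ext ((permCongr _).injective h))
    simp only [Subtype.mk.injEq, Prod.mk.injEq] at this
    obtain ⟨rfl, rfl⟩ := this
    rfl
  · rintro ⟨⟨c, M⟩, hcM⟩
    set e := finBlockEquiv L.headI
    set x := matchingEquiv.symm
      ⟨e.permCongr M, IsPerfectMatching.permCongr ⟨hcM.1.1, hcM.1.2.1⟩ e⟩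
    have hxM : e.symm.permCongr (matching x.1.1 x.1.2) = M := by
      have : matching x.1.1 x.1.2 = e.permCongr M :=
        congrArg Subtype.val (matchingEquiv.apply_symm_apply _)
      rw [this, ← permCongr_symm, symm_apply_apply]
    refine ⟨⟨⟨(c, x.1.1), ?_⟩, ⟨x.1.2, x.2⟩⟩, Subtype.ext (Prod.ext rfl hxM)⟩
    exact (matching_mem_coloredMatchDerangements_iff c _ _).1 (hxM ▸ hcM)

lemma finite_coloredDerangements (L : List ℕ) : (ColoredDerangements L).Finite := by
  refine ((Set.Finite.pi fun i => Set.finite_Icc 1 (conjP L (i.1 + 1))).prod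
    Set.finite_univ).subset ?_
  rintro ⟨c, σ⟩ ⟨⟨hc, -⟩, -⟩
  exact ⟨fun i _ => hc i, trivial⟩

lemma sum_coloredDerangements_comp_cycleCount {L : List ℕ} (hm : 0 < L.headI)
    [Fintype (ColoredDerangements L)] (g : ℕ → ℕ) :
    ∑ x : ColoredDerangements L, g (cycleCount x.1.2) =
      ∑ k ∈ Icc 1 L.headI, dCount L k * g k := by
  rw [← sum_fiberwise_of_maps_to (g := fun x : ColoredDerangements L => cycleCount x.1.2)
    fun x _ => cycleCount_mem_Icc hm x.1.2]
  refine sum_congr rfl fun k _ => ?_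
  rw [sum_congr rfl fun x hx => congrArg g (mem_filter.1 hx).2, sum_const, smul_eq_mul,
    ← Fintype.card_subtype, ← Nat.card_eq_fintype_card, dCount, ← Nat.card_coe_set_eq]
  exact congrArg (· * g k) (Nat.card_congr
    (Equiv.subtypeSubtypeEquivSubtypeInter (· ∈ ColoredDerangements L) (cycleCount ·.2 = k)))

/-- `|D′_λ| = Σ_{k=1}^{λ₁} d^λ_k · 2^{λ₁−k}`. -/
theorem matchDerangements_card_eq_jackD_two (L : List ℕ) (hL : IsPartition L)
    (hne : L ≠ []) :
    (ColoredMatchDerangements L).ncard =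
      ∑ k ∈ Finset.Icc 1 L.headI, dCount L k * 2 ^ (L.headI - k) := by
  have hm : 0 < L.headI := by
    obtain ⟨a, l, rfl⟩ := List.exists_cons_of_ne_nil hne
    exact hL.2 a List.mem_cons_self
  have := (finite_coloredDerangements L).fintype
  calc (ColoredMatchDerangements L).ncard
      = Nat.card (Σ x : ColoredDerangements L, {f // Normalized x.1.2 f}) := by
        rw [← Nat.card_coe_set_eq]
        exact (Nat.card_eq_of_bijective _ (bijective_toColoredMatchDerangement L)).symm
    _ = ∑ x : ColoredDerangements L, 2 ^ (L.headI - cycleCount x.1.2) := by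
        simp only [Nat.card_sigma, card_normalized, Fintype.card_fin,
          cycleCount_eq_card_isCycleMin]
    _ = _ := sum_coloredDerangements_comp_cycleCount hm fun k => 2 ^ (L.headI - k)
end

section
/- (Split lemma.) Let λ be an integer partition with m := λ₁ ≥ 1, let α ∈ ℝ, and set h_j := α(m − j) + λ′_j for 1 ≤ j ≤ m. For 1 ≤ i ≤ m define the sequence g^{(i)} of length m−1 by g^{(i)}_t := h_t − α for t < i and g^{(i)}_t := h_{t+1} for t ≥ i (the first-row lower hook lengths of λ with column i deleted). For a finite sequence u = (u_1,…,u_r) and integer j ≥ 0 set F(u, j) := Π_{l=0}^{j} ((j+1)α − u_{r−l}), F(u, −1) := 1, and G(u, j) := Π_{t=1}^{r−j} (u_t − jα). Then for every integer 0 ≤ j ≤ m−1: α · Σ_{i=1}^{m} F(g^{(i)}, j−1) · G(g^{(i)}, j) = F(h, j−1) · G(h, j) + F(h, j) · G(h, j+1). -/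
open Finset

/-- `Fcorr α u r j = F(u, j−1) = Π_{l=0}^{j−1} (jα − u_{r−l})`, so `F(u,−1) = Fcorr α u r 0 = 1`
and `F(u, j) = Fcorr α u r (j+1)`. -/
noncomputable def Fcorr (α : ℝ) (u : ℕ → ℝ) (r j : ℕ) : ℝ :=
  ∏ l ∈ Finset.range j, ((j : ℝ) * α - u (r - l))

/-- `Glhp α u r j = G(u, j) = Π_{t=1}^{r−j} (u_t − jα)`. -/
noncomputable def Glhp (α : ℝ) (u : ℕ → ℝ) (r j : ℕ) : ℝ :=
  ∏ t ∈ Finset.Icc 1 (r - j), (u t - (j : ℝ) * α)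


/-! Write `λ₁ = n + j + 1`, `a_t = h_t − (j+1)α` and `b_t = h_t − jα`, so that `b_t − a_t = α`.
Deleting a column `i ≤ n + 1` leaves `F(·, j−1)` unchanged and turns `G(·, j)` into
`∏_{t<i} a_t · ∏_{i<t≤n+1} b_t`; deleting a column `i > n + 1` turns `G(·, j)` into `G(h, j+1)`
and `F(·, j−1)` into `∏_{n<t<i} (−a_t) · ∏_{i<t≤λ₁} (−b_t)`. In both ranges `α` times the sum
over `i` telescopes (`∏ b − ∏ a = Σ_i ∏_{t<i} a_t (b_i − a_i) ∏_{t>i} b_t`), and the two boundary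
terms `± F(h, j−1) G(h, j+1) a_{n+1}` cancel. -/

theorem prod_Ico_sub_prod_Ico_eq_mul_sum {R : Type*} [CommRing R] (a b : ℕ → R) (c : R)
    (hab : ∀ t, b t = a t + c) (m n : ℕ) :
    ∏ t ∈ Ico m n, b t - ∏ t ∈ Ico m n, a t =
      c * ∑ i ∈ Ico m n, (∏ t ∈ Ico m i, a t) * ∏ t ∈ Ico (i + 1) n, b t := by
  have key := prod_add_ordered (Ico m n) b (fun _ => -c)
  simp only [show ∀ t, b t + -c = a t from fun t => by rw [hab]; ring] at key
  rw [key, sub_add_cancel_left, ← sum_neg_distrib, mul_sum]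
  refine sum_congr rfl fun i hi => ?_
  have h_lt : {t ∈ Ico m n | t < i} = Ico m i := by
    ext t; simp only [mem_filter, mem_Ico] at hi ⊢; omega
  have h_gt : {t ∈ Ico m n | i < t} = Ico (i + 1) n := by
    ext t; simp only [mem_filter, mem_Ico] at hi ⊢; omega
  rw [h_lt, h_gt]
  ring

theorem fcorr_eq_prod_Ico (α : ℝ) (u : ℕ → ℝ) {r j : ℕ} (hj : j ≤ r + 1) :
    Fcorr α u r j = ∏ t ∈ Ico (r + 1 - j) (r + 1), ((j : ℝ) * α - u t) := by
  rw [Fcorr, range_eq_Ico, prod_Ico_reflect (fun t => (j : ℝ) * α - u t) 0 hj, Nat.sub_zero]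

theorem glhp_eq_prod_Ico (α : ℝ) (u : ℕ → ℝ) (r j : ℕ) :
    Glhp α u r j = ∏ t ∈ Ico 1 (r - j + 1), (u t - (j : ℝ) * α) := by
  rw [Glhp, Ico_add_one_right_eq_Icc]

/-- The paper's `g⁽ⁱ⁾` when `u` is the paper's `h`. -/
def deleteColumn (α : ℝ) (u : ℕ → ℝ) (i : ℕ) (t : ℕ) : ℝ :=
  if t < i then u t - α else u (t + 1)

section SplitSum

variable (α : ℝ) (u : ℕ → ℝ)

theorem fcorr_deleteColumn_of_le {n j i : ℕ} (hi : i ≤ n + 1) :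
    Fcorr α (deleteColumn α u i) (n + j) j = Fcorr α u (n + j + 1) j := by
  refine prod_congr rfl fun l hl => ?_
  rw [mem_range] at hl
  rw [deleteColumn, if_neg (by omega), show n + j - l + 1 = n + j + 1 - l by omega]

theorem glhp_deleteColumn_of_le {n j i : ℕ} (hi₁ : 1 ≤ i) (hi : i ≤ n + 1) :
    Glhp α (deleteColumn α u i) (n + j) j =
      (∏ t ∈ Ico 1 i, (u t - ((j : ℝ) + 1) * α)) * ∏ t ∈ Ico (i + 1) (n + 2), (u t - j * α) := by
  rw [glhp_eq_prod_Ico, Nat.add_sub_cancel, ← prod_Ico_consecutive _ hi₁ hi]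
  congr 1
  · refine prod_congr rfl fun t ht => ?_
    rw [mem_Ico] at ht
    rw [deleteColumn, if_pos ht.2]
    ring
  · rw [← prod_Ico_add' (fun t => u t - j * α)]
    refine prod_congr rfl fun t ht => ?_
    rw [mem_Ico] at ht
    rw [deleteColumn, if_neg (by omega)]

theorem glhp_deleteColumn_of_gt {n j i : ℕ} (hi : n + 1 < i) :
    Glhp α (deleteColumn α u i) (n + j) j = Glhp α u (n + j + 1) (j + 1) := by
  rw [Glhp, Glhp, Nat.add_sub_cancel, show n + j + 1 - (j + 1) = n by omega]
  refine prod_congr rfl fun t ht => ?_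
  rw [mem_Icc] at ht
  rw [deleteColumn, if_pos (by omega)]
  push_cast
  ring

theorem fcorr_deleteColumn_of_ge {n j i : ℕ} (hi₁ : n + 1 ≤ i) (hi : i ≤ n + j + 1) :
    Fcorr α (deleteColumn α u i) (n + j) j =
      (∏ t ∈ Ico (n + 1) i, (((j : ℝ) + 1) * α - u t)) *
        ∏ t ∈ Ico (i + 1) (n + j + 2), ((j : ℝ) * α - u t) := by
  rw [fcorr_eq_prod_Ico _ _ (by omega), show n + j + 1 - j = n + 1 by omega,
    ← prod_Ico_consecutive _ hi₁ hi]
  congr 1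
  · refine prod_congr rfl fun t ht => ?_
    rw [mem_Ico] at ht
    rw [deleteColumn, if_pos ht.2]
    ring
  · rw [← prod_Ico_add' (fun t => (j : ℝ) * α - u t)]
    refine prod_congr rfl fun t ht => ?_
    rw [mem_Ico] at ht
    rw [deleteColumn, if_neg (by omega)]

theorem mul_sum_deleteColumn_left (n j : ℕ) :
    α * ∑ i ∈ Ico 1 (n + 2),
        Fcorr α (deleteColumn α u i) (n + j) j * Glhp α (deleteColumn α u i) (n + j) j =
      Fcorr α u (n + j + 1) j *
        (Glhp α u (n + j + 1) j -
          Glhp α u (n + j + 1) (j + 1) * (u (n + 1) - ((j : ℝ) + 1) * α)) := by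
  have h_term : ∀ i ∈ Ico 1 (n + 2),
      Fcorr α (deleteColumn α u i) (n + j) j * Glhp α (deleteColumn α u i) (n + j) j =
        Fcorr α u (n + j + 1) j * ((∏ t ∈ Ico 1 i, (u t - ((j : ℝ) + 1) * α)) *
          ∏ t ∈ Ico (i + 1) (n + 2), (u t - j * α)) := fun i hi => by
    rw [mem_Ico] at hi
    rw [fcorr_deleteColumn_of_le _ _ (by omega), glhp_deleteColumn_of_le _ _ hi.1 (by omega)]
  have h_Gj : Glhp α u (n + j + 1) j = ∏ t ∈ Ico 1 (n + 2), (u t - j * α) := by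
    rw [glhp_eq_prod_Ico, show n + j + 1 - j + 1 = n + 2 by omega]
  have h_Gj1 : ∏ t ∈ Ico 1 (n + 2), (u t - ((j : ℝ) + 1) * α) =
      Glhp α u (n + j + 1) (j + 1) * (u (n + 1) - ((j : ℝ) + 1) * α) := by
    rw [glhp_eq_prod_Ico, show n + j + 1 - (j + 1) + 1 = n + 1 by omega, Nat.cast_succ,
      ← prod_Ico_succ_top (by omega)]
  rw [sum_congr rfl h_term, ← mul_sum, mul_left_comm,
    ← prod_Ico_sub_prod_Ico_eq_mul_sum _ _ α (fun t => by ring), h_Gj, h_Gj1]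

theorem mul_sum_deleteColumn_right (n j : ℕ) :
    α * ∑ i ∈ Ico (n + 2) (n + j + 2),
        Fcorr α (deleteColumn α u i) (n + j) j * Glhp α (deleteColumn α u i) (n + j) j =
      Glhp α u (n + j + 1) (j + 1) *
        (Fcorr α u (n + j + 1) (j + 1) -
          (((j : ℝ) + 1) * α - u (n + 1)) * Fcorr α u (n + j + 1) j) := by
  set a : ℕ → ℝ := fun t => ((j : ℝ) + 1) * α - u t
  set b : ℕ → ℝ := fun t => (j : ℝ) * α - u t
  have h_term : ∀ i ∈ Ico (n + 2) (n + j + 2),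
      Fcorr α (deleteColumn α u i) (n + j) j * Glhp α (deleteColumn α u i) (n + j) j =
        Glhp α u (n + j + 1) (j + 1) *
          ((∏ t ∈ Ico (n + 1) i, a t) * ∏ t ∈ Ico (i + 1) (n + j + 2), b t) := fun i hi => by
    rw [mem_Ico] at hi
    rw [fcorr_deleteColumn_of_ge _ _ (by omega) (by omega), glhp_deleteColumn_of_gt _ _ (by omega),
      mul_comm]
  have h_Fj : Fcorr α u (n + j + 1) j = ∏ t ∈ Ico (n + 2) (n + j + 2), b t := by
    rw [fcorr_eq_prod_Ico _ _ (by omega), show n + j + 1 + 1 - j = n + 2 by omega]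
  have h_Fj1 : Fcorr α u (n + j + 1) (j + 1) = ∏ t ∈ Ico (n + 1) (n + j + 2), a t := by
    rw [fcorr_eq_prod_Ico _ _ (by omega), show n + j + 1 + 1 - (j + 1) = n + 1 by omega,
      Nat.cast_succ]
  have h_tele := prod_Ico_sub_prod_Ico_eq_mul_sum a b (-α) (fun t => by simp only [a, b]; ring)
    (n + 1) (n + j + 2)
  rw [sum_eq_sum_Ico_succ_bot (by omega), prod_eq_prod_Ico_succ_bot (by omega), Ico_self,
    prod_empty, one_mul, ← h_Fj, ← h_Fj1] at h_tele
  rw [sum_congr rfl h_term, ← mul_sum]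
  linear_combination (Glhp α u (n + j + 1) (j + 1)) * h_tele

theorem mul_sum_deleteColumn (n j : ℕ) :
    α * ∑ i ∈ Icc 1 (n + j + 1),
        Fcorr α (deleteColumn α u i) (n + j) j * Glhp α (deleteColumn α u i) (n + j) j =
      Fcorr α u (n + j + 1) j * Glhp α u (n + j + 1) j +
        Fcorr α u (n + j + 1) (j + 1) * Glhp α u (n + j + 1) (j + 1) := by
  rw [← Ico_add_one_right_eq_Icc, ← sum_Ico_consecutive _ (by omega : 1 ≤ n + 2)
    (by omega : n + 2 ≤ n + j + 1 + 1), mul_add, mul_sum_deleteColumn_left,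
    mul_sum_deleteColumn_right]
  ring

end SplitSum

theorem split_lemma_general (L : List ℕ) (hm : 1 ≤ L.headI) (α : ℝ)
    (j : ℕ) (hj : j ≤ L.headI - 1) :
    α * ∑ i ∈ Finset.Icc 1 L.headI,
          Fcorr α (fun t => if t < i then hlow L α t - α else hlow L α (t + 1))
              (L.headI - 1) j *
            Glhp α (fun t => if t < i then hlow L α t - α else hlow L α (t + 1))
              (L.headI - 1) j =
      Fcorr α (hlow L α) L.headI j * Glhp α (hlow L α) L.headI j +
        Fcorr α (hlow L α) L.headI (j + 1) * Glhp α (hlow L α) L.headI (j + 1) := by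
  obtain ⟨n, hn⟩ : ∃ n, L.headI = n + j + 1 := ⟨L.headI - j - 1, by omega⟩
  rw [show L.headI - 1 = n + j by omega, hn]
  exact mul_sum_deleteColumn α (hlow L α) n j

/-- Split lemma:
`α · Σ_{i=1}^{m} F(g^{(i)}, j−1) · G(g^{(i)}, j) = F(h, j−1)·G(h, j) + F(h, j)·G(h, j+1)`,
where `g^{(i)}` is the sequence of first-row lower hook lengths of `λ` with column `i`
deleted. -/
theorem split_lemma (L : List ℕ) (hL : IsPartition L) (hm : 1 ≤ L.headI) (α : ℝ)
    (j : ℕ) (hj : j ≤ L.headI - 1) :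
    α * ∑ i ∈ Finset.Icc 1 L.headI,
          Fcorr α (fun t => if t < i then hlow L α t - α else hlow L α (t + 1))
              (L.headI - 1) j *
            Glhp α (fun t => if t < i then hlow L α t - α else hlow L α (t + 1))
              (L.headI - 1) j =
      Fcorr α (hlow L α) L.headI j * Glhp α (hlow L α) L.headI j +
        Fcorr α (hlow L α) L.headI (j + 1) * Glhp α (hlow L α) L.headI (j + 1) :=
  split_lemma_general L hm α j hj
end

section
/- For every integer partition λ with m := λ₁, every real α, and every integer 0 ≤ k ≤ m, writing h_j := α(m − j) + λ′_j: α^k · k! · Σ_{I ⊆ {1,…,m}, |I| = k} Π_{j ∉ I} ( h_j − α·#{i ∈ I : i > j} ) = Σ_{j=0}^{k} (−1)^j · C(k, j) · Π_{i=1}^{m} (h_i − jα). (The left-hand inner product is the principal lower hook product of λ with the columns indexed by I deleted; equivalently, the k-th order finite difference of the polynomial x ↦ Π_i(h_i − xα) at 0 is, up to sign and a factorial, the sum of principal lower hook products over all deletions of k columns.) -/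
open Finset

/-!
Let `G_y(I) = ∏_{j ∈ S \ I} (f j - (y + #{i ∈ I | j < i}) α)`. For `S = {1,…,λ₁}` and `f = h`,
`G_0(I)` is the principal lower hook product of `λ` with the columns `I` deleted, while
`G_y(∅) = ∏_j (h_j - yα)`. Telescoping over the columns of `S \ I` gives
`G_y(I) - G_{y+1}(I) = α ∑_{t ∉ I} G_y(I ∪ {t})`, and summing over `#I = k` every `(k+1)`-set
arises `k+1` times. Hence `Δ^k (y ↦ ∏_j (h_j - yα)) = (-α)^k k! ∑_{#I = k} G_y(I)`, and at `y = 0`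
the left side expands binomially.
-/

namespace Finset

variable {ι : Type*} [LinearOrder ι]

theorem prod_erase_eq_prod_lt_mul_prod_gt {M : Type*} [CommMonoid M] (s : Finset ι) (t : ι)
    (g : ι → M) :
    ∏ j ∈ s.erase t, g j = (∏ j ∈ s with j < t, g j) * ∏ j ∈ s with t < j, g j := by
  rw [← prod_filter_mul_prod_filter_not (s.erase t) (· < t)]
  congr 1 <;> refine prod_congr ?_ fun _ _ => rfl <;> ext j <;>
    simp only [mem_filter, mem_erase] <;> grind

theorem sum_powersetCard_sum_sdiff_insert {M : Type*} [AddCommMonoid M] (S : Finset ι) (k : ℕ)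
    (F : Finset ι → M) :
    ∑ I ∈ S.powersetCard k, ∑ t ∈ S \ I, F (insert t I) =
      (k + 1) • ∑ J ∈ S.powersetCard (k + 1), F J := by
  have hcount : ∑ J ∈ S.powersetCard (k + 1), ∑ _t ∈ J, F J =
      (k + 1) • ∑ J ∈ S.powersetCard (k + 1), F J := by
    rw [smul_sum]
    refine sum_congr rfl fun J hJ => ?_
    rw [sum_const, (mem_powersetCard.mp hJ).2]
  rw [← hcount, sum_sigma', sum_sigma']
  refine sum_nbij' (fun p => ⟨insert p.2 p.1, p.2⟩) (fun p => ⟨p.1.erase p.2, p.2⟩)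
    ?_ ?_ ?_ ?_ fun _ _ => rfl
  · rintro ⟨I, t⟩ hp
    simp only [mem_sigma, mem_powersetCard, mem_sdiff] at hp ⊢
    obtain ⟨⟨hIS, rfl⟩, htS, htI⟩ := hp
    exact ⟨⟨insert_subset htS hIS, card_insert_of_notMem htI⟩, mem_insert_self t I⟩
  · rintro ⟨J, t⟩ hp
    simp only [mem_sigma, mem_powersetCard, mem_sdiff] at hp ⊢
    obtain ⟨⟨hJS, hJk⟩, htJ⟩ := hp
    exact ⟨⟨(erase_subset t J).trans hJS, by rw [card_erase_of_mem htJ, hJk]; rfl⟩,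
      hJS htJ, notMem_erase t J⟩
  · rintro ⟨I, t⟩ hp
    simp only [mem_sigma, mem_sdiff] at hp
    simp [erase_insert hp.2.2]
  · rintro ⟨J, t⟩ hp
    simp only [mem_sigma] at hp
    simp [insert_erase hp.2]

end Finset

open scoped fwdDiff

section DeletedHookProducts

variable {ι R : Type*} [LinearOrder ι] [CommRing R] (S : Finset ι) (f : ι → R) (α : R)

def deletedHookProd (y : R) (I : Finset ι) : R :=
  ∏ j ∈ S \ I, (f j - (y + #{i ∈ I | j < i}) * α)

def deletedHookSum (k : ℕ) (y : R) : R :=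
  ∑ I ∈ S.powersetCard k, deletedHookProd S f α y I

theorem deletedHookProd_sub_deletedHookProd_add_one (y : R) (I : Finset ι) :
    deletedHookProd S f α y I - deletedHookProd S f α (y + 1) I =
      α * ∑ t ∈ S \ I, deletedHookProd S f α y (insert t I) := by
  unfold deletedHookProd
  have hshift : ∏ j ∈ S \ I, (f j - (y + 1 + #{i ∈ I | j < i}) * α) =
      ∏ j ∈ S \ I, ((f j - (y + #{i ∈ I | j < i}) * α) - α) :=
    prod_congr rfl fun _ _ => by ring
  rw [hshift, prod_sub_ordered (S \ I) (fun j => f j - (y + #{i ∈ I | j < i}) * α) fun _ => α,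
    sub_sub_cancel, mul_sum]
  refine sum_congr rfl fun t ht => ?_
  have htI : t ∉ I := (mem_sdiff.mp ht).2
  have herase : S \ insert t I = (S \ I).erase t := by
    ext j
    simp only [mem_sdiff, mem_insert, mem_erase]
    tauto
  rw [herase, prod_erase_eq_prod_lt_mul_prod_gt, mul_assoc]
  -- only the columns left of `t` see one more deleted column to their right
  congr 2
  · refine prod_congr rfl fun j hj => ?_
    rw [filter_insert, if_pos (mem_filter.mp hj).2,
      card_insert_of_notMem fun h => htI (mem_filter.mp h).1]
    push_cast
    ring
  · refine prod_congr rfl fun j hj => ?_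
    rw [filter_insert, if_neg (lt_asymm (mem_filter.mp hj).2)]

theorem deletedHookSum_sub_deletedHookSum_add_one (k : ℕ) (y : R) :
    deletedHookSum S f α k y - deletedHookSum S f α k (y + 1) =
      (k + 1) * α * deletedHookSum S f α (k + 1) y := by
  simp only [deletedHookSum, ← sum_sub_distrib, deletedHookProd_sub_deletedHookProd_add_one,
    ← mul_sum, sum_powersetCard_sum_sdiff_insert, nsmul_eq_mul]
  push_cast
  ring

theorem fwdDiff_deletedHookSum (k : ℕ) :
    Δ_[1] (deletedHookSum S f α k) = -((k + 1) * α) • deletedHookSum S f α (k + 1) := by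
  ext y
  rw [fwdDiff, Pi.smul_apply, smul_eq_mul]
  linear_combination -deletedHookSum_sub_deletedHookSum_add_one S f α k y

theorem fwdDiff_iter_deletedHookSum_zero (k : ℕ) :
    (Δ_[1])^[k] (deletedHookSum S f α 0) = ((-α) ^ k * k.factorial) • deletedHookSum S f α k := by
  induction k with
  | zero => simp
  | succ k ih =>
    rw [Function.iterate_succ_apply', ih, fwdDiff_const_smul, fwdDiff_deletedHookSum, smul_smul,
      Nat.factorial_succ]
    push_cast
    congr 1
    ring

theorem deletedHookSum_zero (y : R) : deletedHookSum S f α 0 y = ∏ j ∈ S, (f j - y * α) := by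
  simp [deletedHookSum, deletedHookProd]

end DeletedHookProducts

theorem kth_finite_difference_general (L : List ℕ) (α : ℝ) (k : ℕ) :
    α ^ k * (k.factorial : ℝ) *
        ∑ I ∈ Finset.powersetCard k (Finset.Icc 1 L.headI),
          ∏ j ∈ Finset.Icc 1 L.headI \ I,
            (hlow L α j - α * (((I.filter fun i => j < i)).card : ℝ)) =
      ∑ j ∈ Finset.range (k + 1),
        (-1 : ℝ) ^ j * (Nat.choose k j : ℝ) *
          ∏ i ∈ Finset.Icc 1 L.headI, (hlow L α i - (j : ℝ) * α) := by
  set S := Icc 1 L.headI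
  have hD : ∑ I ∈ S.powersetCard k, ∏ j ∈ S \ I, (hlow L α j - α * #{i ∈ I | j < i}) =
      deletedHookSum S (hlow L α) α k 0 :=
    sum_congr rfl fun I _ => prod_congr rfl fun j _ => by ring
  have hsq : (-1 : ℝ) ^ k * (-1) ^ k = 1 := by rw [← mul_pow]; norm_num
  have hsign : ∀ j ≤ k, (-1 : ℝ) ^ k * (-1) ^ (k - j) = (-1) ^ j := fun j hj => by
    rw [← pow_add, show k + (k - j) = j + 2 * (k - j) by omega, pow_add, pow_mul, neg_one_sq,
      one_pow, mul_one]
  rw [hD]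
  calc α ^ k * k.factorial * deletedHookSum S (hlow L α) α k 0
      = (-1) ^ k * (Δ_[1])^[k] (deletedHookSum S (hlow L α) α 0) 0 := by
        rw [fwdDiff_iter_deletedHookSum_zero, Pi.smul_apply, smul_eq_mul, neg_pow]
        linear_combination -(α ^ k * k.factorial * deletedHookSum S (hlow L α) α k 0) * hsq
    _ = _ := by
      rw [fwdDiff_iter_eq_sum_shift, mul_sum]
      refine sum_congr rfl fun j hj => ?_
      rw [deletedHookSum_zero, zero_add, nsmul_one, zsmul_eq_mul,
        ← hsign j (Nat.lt_succ_iff.mp (mem_range.mp hj))]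
      push_cast
      ring

/-- `α^k · k! · Σ_{|I| = k} Π_{j ∉ I} (h_j − α·#{i ∈ I : i > j})
= Σ_{j=0}^{k} (−1)^j C(k,j) Π_{i=1}^{m} (h_i − jα)`. -/
theorem kth_finite_difference (L : List ℕ) (hL : IsPartition L) (α : ℝ)
    (k : ℕ) (hk : k ≤ L.headI) :
    α ^ k * (k.factorial : ℝ) *
        ∑ I ∈ Finset.powersetCard k (Finset.Icc 1 L.headI),
          ∏ j ∈ Finset.Icc 1 L.headI \ I,
            (hlow L α j - α * (((I.filter fun i => j < i)).card : ℝ)) =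
      ∑ j ∈ Finset.range (k + 1),
        (-1 : ℝ) ^ j * (Nat.choose k j : ℝ) *
          ∏ i ∈ Finset.Icc 1 L.headI, (hlow L α i - (j : ℝ) * α) :=
  kth_finite_difference_general L α k
end

section
/- (Falling-factorial expansion of the shifted principal lower hook product.) For an integer partition λ let λ̂ denote the partition (λ₁−1, λ₂−1, …) with zero parts removed, and let ℓ(λ) = λ′_1 be the number of parts of λ. Define coefficients c^λ_k(α) for k ∈ ℤ by: c^∅_0 := 1 and c^∅_k := 0 for k ≠ 0, and recursively c^λ_k := (α(λ₁ − 1 − k) + ℓ(λ)) · c^{λ̂}_k − c^{λ̂}_{k−1}. Then for every real α and every real x, writing h_i := α(λ₁ − i) + λ′_i: Π_{i=1}^{λ₁} (h_i − xα) = Σ_{k=0}^{λ₁} c^λ_k(α) · α^k · x(x−1)⋯(x−k+1). -/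
open Finset

/-! Deleting the first column of `λ` (which gives `λ̂`) removes the factor
`h₁ - xα = α(λ₁ - 1) + ℓ(λ) - xα` from the product and turns the remaining hook lengths of `λ`
into those of `λ̂`. By induction on `λ₁` it therefore suffices to multiply the expansion for `λ̂`
by that factor, and the falling-factorial identity `x (x)ₖ = (x)ₖ₊₁ + k (x)ₖ` turns the product
into exactly the recurrence defining `c^λ_k`. -/

lemma prod_Icc_one_eq_prod_range {M : Type*} [CommMonoid M] (f : ℕ → M) (n : ℕ) :
    ∏ i ∈ Icc 1 n, f i = ∏ i ∈ range n, f (i + 1) := by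
  rw [← Ico_add_one_right_eq_Icc, prod_Ico_eq_prod_range]
  simp [add_comm]

lemma sub_mul_sum_fallingFactorial (α β x : ℝ) (a : ℤ → ℝ) (m : ℕ) (h_neg : a (-1) = 0)
    (h_top : a (m + 1) = 0) :
    (β - x * α) * ∑ k ∈ range (m + 1), a k * α ^ k * ∏ t ∈ range k, (x - t) =
      ∑ k ∈ range (m + 2),
        ((β - α * k) * a k - a (k - 1)) * α ^ k * ∏ t ∈ range k, (x - t) := by
  have h_lower : ∑ k ∈ range (m + 2), a (k - 1) * α ^ k * ∏ t ∈ range k, (x - t) =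
      ∑ k ∈ range (m + 1), a k * α ^ (k + 1) * ∏ t ∈ range (k + 1), (x - t) := by
    rw [sum_range_succ']
    simp [h_neg]
  have h_upper : ∑ k ∈ range (m + 2), (β - α * k) * a k * α ^ k * ∏ t ∈ range k, (x - t) =
      ∑ k ∈ range (m + 1), (β - α * k) * a k * α ^ k * ∏ t ∈ range k, (x - t) := by
    rw [sum_range_succ]
    simp [h_top]
  calc (β - x * α) * ∑ k ∈ range (m + 1), a k * α ^ k * ∏ t ∈ range k, (x - t)
      = ∑ k ∈ range (m + 1), ((β - α * k) * a k * α ^ k * ∏ t ∈ range k, (x - t) -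
          a k * α ^ (k + 1) * ∏ t ∈ range (k + 1), (x - t)) := by
        rw [mul_sum]
        refine sum_congr rfl fun k _ => ?_
        rw [prod_range_succ]
        ring
    _ = _ := by
        rw [sum_sub_distrib, ← h_upper, ← h_lower, ← sum_sub_distrib]
        refine sum_congr rfl fun k _ => ?_
        ring

def dropFirstColumn (M : List ℕ) : List ℕ := (M.map fun p => p - 1).filter fun p => decide (0 < p)

lemma conjP_dropFirstColumn (M : List ℕ) {j : ℕ} (hj : 1 ≤ j) :
    conjP (dropFirstColumn M) j = conjP M (j + 1) := by
  unfold conjP dropFirstColumn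
  rw [List.filter_filter, List.filter_map, List.length_map]
  congr 1
  refine List.filter_congr fun q _ => ?_
  change (decide (j ≤ q - 1) && decide (0 < q - 1)) = decide (j + 1 ≤ q)
  rw [Bool.and_comm, ← Bool.decide_and, decide_eq_decide]
  omega

lemma isPartition_dropFirstColumn {M : List ℕ} (hM : IsPartition M) :
    IsPartition (dropFirstColumn M) :=
  ⟨(hM.1.map _ fun a b (hab : a ≥ b) => Nat.sub_le_sub_right hab 1).filter _,
    fun _ hp => by simpa using List.of_mem_filter hp⟩

lemma headI_dropFirstColumn {M : List ℕ} (hM : IsPartition M) :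
    (dropFirstColumn M).headI = M.headI - 1 := by
  obtain _ | ⟨p, rest⟩ := M
  · rfl
  obtain ⟨hsorted, hpos⟩ := hM
  rw [List.pairwise_cons] at hsorted
  by_cases hp : 2 ≤ p
  · simp [dropFirstColumn, show 0 < p - 1 by omega]
  · have hall : ∀ q ∈ p :: rest, q = 1 := fun q hq => by
      have := hpos q hq
      rcases List.mem_cons.mp hq with rfl | hq
      · omega
      · have := hsorted.1 q hq; omega
    have hnil : dropFirstColumn (p :: rest) = [] := by
      simp only [dropFirstColumn, List.filter_eq_nil_iff, List.mem_map]
      rintro _ ⟨q, hq, rfl⟩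
      simp [hall q hq]
    rw [hnil, hall p List.mem_cons_self]
    rfl

lemma one_le_headI {M : List ℕ} (hM : IsPartition M) (hne : M ≠ []) : 1 ≤ M.headI := by
  obtain _ | ⟨p, rest⟩ := M
  · exact absurd rfl hne
  · exact hM.2 p List.mem_cons_self

lemma conjP_one {M : List ℕ} (hM : IsPartition M) : conjP M 1 = M.length :=
  congrArg List.length <| List.filter_eq_self.mpr fun a ha => decide_eq_true (hM.2 a ha)

section HookLengths

variable {L : List ℕ} (α : ℝ)

lemma hlow_one (hL : IsPartition L) : hlow L α 1 = α * ((L.headI : ℝ) - 1) + L.length := by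
  rw [hlow, conjP_one hL, Nat.cast_one]

lemma hlow_succ (hL : IsPartition L) (hne : L ≠ []) {j : ℕ} (hj : 1 ≤ j) :
    hlow L α (j + 1) = hlow (dropFirstColumn L) α j := by
  have := one_le_headI hL hne
  rw [hlow, hlow, conjP_dropFirstColumn L hj, headI_dropFirstColumn hL]
  push_cast [this]
  ring

lemma prod_hlow_sub_eq_mul (hL : IsPartition L) (hne : L ≠ []) (x : ℝ) :
    ∏ i ∈ Icc 1 L.headI, (hlow L α i - x * α) =
      (α * ((L.headI : ℝ) - 1) + L.length - x * α) *
        ∏ i ∈ Icc 1 (dropFirstColumn L).headI, (hlow (dropFirstColumn L) α i - x * α) := by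
  obtain ⟨m, hm⟩ := Nat.exists_eq_add_of_le' (one_le_headI hL hne)
  rw [headI_dropFirstColumn hL, hm, Nat.add_sub_cancel, prod_Icc_one_eq_prod_range,
    prod_Icc_one_eq_prod_range, prod_range_succ', ← hm, hlow_one α hL, mul_comm]
  congr 1
  refine prod_congr rfl fun i _ => ?_
  rw [hlow_succ α hL hne (by omega)]

end HookLengths

/-- `c M k` is the coefficient `c^λ_k(α)` of the statement, for `λ = M`. -/
def IsHookCoeff (α : ℝ) (c : List ℕ → ℤ → ℝ) : Prop :=
  (∀ k : ℤ, c [] k = if k = 0 then 1 else 0) ∧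
    ∀ M : List ℕ, M ≠ [] → ∀ k : ℤ,
      c M k = (α * ((M.headI : ℝ) - 1 - k) + M.length) * c (dropFirstColumn M) k -
        c (dropFirstColumn M) (k - 1)

lemma IsHookCoeff.eq_zero_of_lt_zero_or_headI_lt {α : ℝ} {c : List ℕ → ℤ → ℝ} (hc : IsHookCoeff α c) {M : List ℕ}
    (hM : IsPartition M) {k : ℤ} (hk : k < 0 ∨ M.headI < k) : c M k = 0 := by
  rcases eq_or_ne M [] with rfl | hne
  · rw [hc.1, if_neg (by simp at hk; omega)]
  have := one_le_headI hM hne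
  have hhead := headI_dropFirstColumn hM
  rw [hc.2 M hne, hc.eq_zero_of_lt_zero_or_headI_lt (isPartition_dropFirstColumn hM) (k := k) (by omega),
    hc.eq_zero_of_lt_zero_or_headI_lt (isPartition_dropFirstColumn hM) (k := k - 1) (by omega), mul_zero, sub_zero]
termination_by M.headI
decreasing_by all_goals omega

/-- Falling-factorial expansion of the shifted principal lower hook
product. The coefficients `c^λ_k(α)` are specified by their defining recurrence, where
`λ̂ = (λ₁−1, λ₂−1, …)` with zero parts removed. -/
theorem falling_factorial_expansion (α : ℝ) (c : List ℕ → ℤ → ℝ)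
    (hc0 : ∀ k : ℤ, c [] k = if k = 0 then 1 else 0)
    (hcrec : ∀ M : List ℕ, M ≠ [] → ∀ k : ℤ,
      c M k =
        (α * ((M.headI : ℝ) - 1 - (k : ℝ)) + (M.length : ℝ)) *
            c ((M.map fun p => p - 1).filter fun p => decide (0 < p)) k
          - c ((M.map fun p => p - 1).filter fun p => decide (0 < p)) (k - 1))
    (L : List ℕ) (hL : IsPartition L) (x : ℝ) :
    ∏ i ∈ Finset.Icc 1 L.headI, (hlow L α i - x * α) =
      ∑ k ∈ Finset.range (L.headI + 1),
        c L (k : ℤ) * α ^ k * ∏ t ∈ Finset.range k, (x - (t : ℝ)) := by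
  have hc : IsHookCoeff α c := ⟨hc0, hcrec⟩
  obtain ⟨n, hn⟩ : ∃ n, L.headI = n := ⟨_, rfl⟩
  induction n using Nat.strong_induction_on generalizing L with
  | _ n ih =>
    rcases eq_or_ne L [] with rfl | hne
    · simp [hc0]
    have hL' := isPartition_dropFirstColumn hL
    have hhead := headI_dropFirstColumn hL
    obtain ⟨m, rfl⟩ : ∃ m, n = m + 1 := ⟨n - 1, by have := one_le_headI hL hne; omega⟩
    have hc_neg := hc.eq_zero_of_lt_zero_or_headI_lt hL' (k := -1) (by omega)
    have hc_top := hc.eq_zero_of_lt_zero_or_headI_lt hL' (k := m + 1) (by omega)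
    rw [prod_hlow_sub_eq_mul α hL hne, ih m (by omega) _ hL' (by omega), hhead, hn,
      Nat.add_sub_cancel, sub_mul_sum_fallingFactorial _ _ _ _ _ hc_neg hc_top]
    refine sum_congr rfl fun k _ => ?_
    rw [hc.2 L hne, hn]
    push_cast
    ring
end

section
/- For every real α ≥ 1 and every integer n ≥ 4, the Jack derangement number of the one-row shape (n) satisfies 3 · D^{(n)}_α > Π_{i=1}^{n} (α(n − i) + 1), where D^{(n)}_α = Σ_{k=1}^{n} d_k α^{n−k} and d_k is the number of fixed-point-free permutations of an n-element set having exactly k cycles. -/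
/-!
Write `ℓ(σ) = n − cyc(σ)`, so that `D^{(n)}_α = W_n := ∑_{σ derangement of [n]} α^{ℓ(σ)}`.
A derangement `F` of `Option β` is `swap none (some a) * optionCongr τ`, where `a = F none` and
`τ` may fix `a` but nothing else, and `ℓ(F) = ℓ(τ) + 1` because `swap x (F x) * F` splits `x`
off its cycle as a new fixed point. Sorting `τ` by whether it fixes `a` gives the weighted
derangement recurrence `W_{m+2} = (m+1) α (W_{m+1} + W_m)`, `W_0 = 1`, `W_1 = 0`.
The hook product `P_m = ∏_{j<m} (jα + 1)` satisfies `P_{m+2} ≤ (m+1) α (P_{m+1} + P_m)` when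
`α ≥ 1`, so `P_m < 3 W_m` propagates from `P_3 ≤ 3 W_3` and `P_4 < 3 W_4`.
-/

open Finset

open Equiv Function

namespace Equiv.Perm

variable {β γ : Type*} [Fintype β] [DecidableEq β] [Fintype γ] [DecidableEq γ]

/-- `m` minus the number of cycles (fixed points included) of `σ : Perm (Fin m)`: the exponent
of `α` in `JackD`. -/
def absLength (σ : Perm β) : ℕ := (σ.cycleType.map (· - 1)).sum

@[simp]
lemma absLength_one : absLength (1 : Perm β) = 0 := by simp [absLength]

lemma absLength_add_card_cycleType (σ : Perm β) :
    σ.absLength + Multiset.card σ.cycleType = #σ.support := by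
  rw [← sum_cycleType, absLength]
  calc (σ.cycleType.map (· - 1)).sum + Multiset.card σ.cycleType
      = (σ.cycleType.map fun k => k - 1 + 1).sum := by
        rw [Multiset.sum_map_add, Multiset.map_const', Multiset.sum_replicate, smul_eq_mul, mul_one]
    _ = σ.cycleType.sum := by
        rw [Multiset.map_congr rfl fun k hk => Nat.sub_add_cancel
          (one_le_two.trans (two_le_of_mem_cycleType hk)), Multiset.map_id']

lemma Disjoint.absLength_mul {σ τ : Perm β} (h : σ.Disjoint τ) :
    (σ * τ).absLength = σ.absLength + τ.absLength := by
  simp [absLength, h.cycleType_mul]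

lemma IsCycle.absLength {c : Perm β} (hc : c.IsCycle) : c.absLength = #c.support - 1 := by
  simp [Perm.absLength, hc.cycleType]

@[simp]
lemma absLength_extendDomain {p : γ → Prop} [DecidablePred p] (f : β ≃ Subtype p) (σ : Perm β) :
    (σ.extendDomain f).absLength = σ.absLength := by
  simp [absLength]

@[simp]
lemma absLength_ofSubtype {p : β → Prop} [DecidablePred p] (σ : Perm (Subtype p)) :
    (ofSubtype σ).absLength = σ.absLength :=
  absLength_extendDomain _ σ

@[simp]
lemma absLength_optionCongr (σ : Perm β) : absLength (optionCongr σ) = σ.absLength := by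
  have : σ.optionCongr = σ.extendDomain (optionIsSomeEquiv β).symm := by
    ext (_ | a)
    · rw [extendDomain_apply_not_subtype] <;> simp
    · rw [extendDomain_apply_subtype (p := fun x : Option β => x.isSome) _ _ rfl]
      simp
  rw [this, absLength_extendDomain]

@[simp]
lemma absLength_permCongr (e : β ≃ γ) (σ : Perm β) : (e.permCongr σ).absLength = σ.absLength := by
  have : e.permCongr σ = σ.extendDomain (e.trans (subtypeUnivEquiv fun _ => trivial).symm) := by
    ext x
    rw [extendDomain_apply_subtype (p := fun _ : γ => True) _ _ trivial]
    simp [subtypeUnivEquiv]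
  rw [this, absLength_extendDomain]

lemma IsCycle.absLength_swap_mul {c : Perm β} (hc : c.IsCycle) {x : β} (hx : c x ≠ x) :
    (swap x (c x) * c).absLength + 1 = c.absLength := by
  rw [hc.absLength]
  by_cases h2 : c (c x) = x
  · rw [hc.eq_swap_of_apply_apply_eq_self hx h2, swap_apply_left, Equiv.swap_mul_self,
      card_support_swap hx.symm, absLength_one]
  · have hsupp := support_swap_mul_eq c x h2
    have hcard := hc.two_le_card_support
    rw [(hc.swap_mul hx h2).absLength, hsupp, card_sdiff_of_subset (by simpa using hx),
      card_singleton]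
    omega

lemma absLength_swap_mul {σ : Perm β} {x : β} (hx : σ x ≠ x) :
    (swap x (σ x) * σ).absLength + 1 = σ.absLength := by
  set c := σ.cycleOf x
  have hcx : c x = σ x := cycleOf_apply_self σ x
  have hdisj : (σ * c⁻¹).Disjoint c := disjoint_mul_inv_of_mem_cycleFactorsFinset
    (cycleOf_mem_cycleFactorsFinset_iff.mpr (mem_support.mpr hx))
  have hdisj' : (swap x (c x) * c).Disjoint (σ * c⁻¹) :=
    hdisj.symm.mono (fun y hy => (mem_support_swap_mul_imp_mem_support_ne hy).1) le_rfl
  have hσ : σ = c * (σ * c⁻¹) := by rw [← hdisj.commute.eq]; simp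
  have hsplit : swap x (σ x) * σ = (swap x (c x) * c) * (σ * c⁻¹) := by
    rw [hcx, mul_assoc, ← hσ]
  rw [hsplit, hdisj'.absLength_mul, add_right_comm,
    (isCycle_cycleOf σ hx).absLength_swap_mul (hcx ▸ hx), ← hdisj.symm.absLength_mul, ← hσ]

end Equiv.Perm

open Equiv.Perm

section DerangementWeight

variable {R : Type*} [CommSemiring R] {β γ : Type*} [DecidableEq β]

lemma decomposeOption_symm_some_mem_derangements {a : β} {τ : Perm β}
    (h : fixedPoints τ ⊆ {a}) : decomposeOption.symm (some a, τ) ∈ derangements (Option β) := by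
  rw [← Set.mem_ofPred_eq (p := fun τ : Perm β => fixedPoints τ ⊆ {a}),
    ← derangements.Equiv.RemoveNone.fiber_some, derangements.Equiv.RemoveNone.mem_fiber] at h
  obtain ⟨F, hF, hFa, rfl⟩ := h
  rw [← hFa]
  convert hF using 1
  exact decomposeOption.symm_apply_apply F

variable [Fintype β] [Fintype γ] [DecidableEq γ]

noncomputable def derangementWeight (α : R) (β : Type*) [Fintype β] [DecidableEq β] : R :=
  ∑ σ : derangements β, α ^ (σ : Perm β).absLength

lemma derangementWeight_congr (α : R) (e : β ≃ γ) :
    derangementWeight α β = derangementWeight α γ :=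
  Fintype.sum_equiv e.derangementsCongr _ _ fun σ => by
    rw [← absLength_permCongr e]; rfl

lemma absLength_decomposeOption_symm_some (a : β) (τ : Perm β) :
    (decomposeOption.symm (some a, τ)).absLength = τ.absLength + 1 := by
  have hnone : decomposeOption.symm (some a, τ) none = some a := by simp
  rw [← absLength_swap_mul (x := none) (by simp), hnone]
  simp [← mul_assoc]

lemma sum_atMostOneFixedPoint (α : R) (a : β)
    [DecidablePred fun τ : Perm β => fixedPoints τ ⊆ {a}] :
    ∑ τ : {τ : Perm β // fixedPoints τ ⊆ {a}}, α ^ (τ : Perm β).absLength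
      = derangementWeight α ({a}ᶜ : Set β) + derangementWeight α β := by
  rw [← Fintype.sum_equiv (derangements.atMostOneFixedPointEquivSum_derangements a).symm
    (fun x => Sum.elim
      (fun τ : derangements ({a}ᶜ : Set β) => α ^ (τ : Perm ({a}ᶜ : Set β)).absLength)
      (fun τ : derangements β => α ^ (τ : Perm β).absLength) x) _ ?_, Fintype.sum_sum_type]
  · rfl
  · rintro (τ | τ)
    · exact (congrArg (α ^ ·) (absLength_ofSubtype (τ : Perm ({a}ᶜ : Set β)))).symm
    · rfl

lemma derangementWeight_option (α : R) :
    derangementWeight α (Option β)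
      = α * ∑ a : β, (derangementWeight α ({a}ᶜ : Set β) + derangementWeight α β) := by
  classical
  let g : (Σ a : β, {τ : Perm β // fixedPoints τ ⊆ {a}}) → derangements (Option β) :=
    fun x => ⟨decomposeOption.symm (some x.1, x.2),
      decomposeOption_symm_some_mem_derangements x.2.2⟩
  have hg : g.Bijective := by
    refine (Fintype.bijective_iff_injective_and_card g).2 ⟨?_, ?_⟩
    · rintro ⟨a, τ⟩ ⟨b, υ⟩ h
      have hτ := decomposeOption.symm.injective (congrArg Subtype.val h)
      simp only [Prod.mk.injEq, Option.some.injEq] at hτ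
      obtain ⟨rfl, hτ⟩ := hτ
      exact Sigma.ext rfl (heq_of_eq (Subtype.ext hτ))
    · exact (Fintype.card_congr derangements.derangementsOptionEquivSigmaAtMostOneFixedPoint).symm
  rw [derangementWeight,
    ← Fintype.sum_bijective g hg (fun x => α ^ ((x.2 : Perm β).absLength + 1)) _
      fun x => by simp only [g, absLength_decomposeOption_symm_some],
    Fintype.sum_sigma, Finset.mul_sum]
  refine Finset.sum_congr rfl fun a _ => ?_
  rw [← sum_atMostOneFixedPoint, Finset.mul_sum]
  simp only [pow_succ, mul_comm]

lemma derangementWeight_eq_of_card_eq (α : R) (h : Fintype.card β = Fintype.card γ) :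
    derangementWeight α β = derangementWeight α γ :=
  derangementWeight_congr α (Fintype.equivOfCardEq h)

lemma derangementWeight_of_isEmpty [IsEmpty β] (α : R) : derangementWeight α β = 1 := by
  rw [derangementWeight, Fintype.sum_subsingleton _ ⟨1, isEmptyElim⟩, absLength_one, pow_zero]

lemma derangementWeight_fin_one (α : R) : derangementWeight α (Fin 1) = 0 :=
  haveI : IsEmpty (derangements (Fin 1)) := ⟨fun σ => σ.2 0 (Subsingleton.elim _ _)⟩
  Fintype.sum_empty _

lemma derangementWeight_fin_add_two (α : R) (m : ℕ) :
    derangementWeight α (Fin (m + 2))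
      = (m + 1) * α * (derangementWeight α (Fin (m + 1)) + derangementWeight α (Fin m)) := by
  have hcompl (a : Fin (m + 1)) :
      Fintype.card ({a}ᶜ : Set (Fin (m + 1))) = Fintype.card (Fin m) := by
    rw [Fintype.card_compl_set]
    simp
  rw [derangementWeight_congr α (finSuccEquiv (m + 1)), derangementWeight_option]
  simp only [derangementWeight_eq_of_card_eq α (hcompl _), Finset.sum_const, Finset.card_univ,
    Fintype.card_fin, nsmul_eq_mul]
  push_cast
  ring

end DerangementWeight

section LowerBound

variable {α : ℝ}

lemma prod_range_add_two_le (hα : 1 ≤ α) (m : ℕ) :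
    ∏ j ∈ range (m + 2), ((j : ℝ) * α + 1)
      ≤ (m + 1) * α *
          (∏ j ∈ range (m + 1), ((j : ℝ) * α + 1) + ∏ j ∈ range m, ((j : ℝ) * α + 1)) := by
  have hpos : 0 ≤ ∏ j ∈ range m, ((j : ℝ) * α + 1) :=
    prod_nonneg fun j _ => by positivity
  simp only [prod_range_succ]
  push_cast
  -- `(mα + 1)((m + 1)α + 1) = (m + 1)α(mα + 2) - (α - 1)`
  nlinarith [mul_nonneg hpos (sub_nonneg.mpr hα)]

lemma prod_range_lt_three_mul_derangementWeight (hα : 1 ≤ α) {m : ℕ} (hm : 4 ≤ m) :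
    ∏ j ∈ range m, ((j : ℝ) * α + 1) < 3 * derangementWeight α (Fin m) := by
  set P : ℕ → ℝ := fun k => ∏ j ∈ range k, ((j : ℝ) * α + 1) with hP
  set D : ℕ → ℝ := fun k => derangementWeight α (Fin k)
  have hD (k : ℕ) : D (k + 2) = (k + 1) * α * (D (k + 1) + D k) :=
    derangementWeight_fin_add_two α k
  have hbase : P 3 ≤ 3 * D 3 ∧ P 4 < 3 * D 4 := by
    have hD0 : D 0 = 1 := derangementWeight_of_isEmpty α
    have hD1 : D 1 = 0 := derangementWeight_fin_one α
    simp only [hP, hD 2, hD 1, hD 0, hD0, hD1, prod_range_succ, prod_range_zero]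
    norm_num
    have h1 : 0 ≤ α - 1 := sub_nonneg.mpr hα
    have h0 : 0 ≤ α := by linarith
    constructor <;> nlinarith [mul_nonneg (mul_nonneg h0 h0) h1, mul_nonneg h0 h1]
  obtain ⟨m, rfl⟩ : ∃ k, m = k + 1 := ⟨m - 1, by omega⟩
  suffices ∀ k ≥ 3, P k ≤ 3 * D k ∧ P (k + 1) < 3 * D (k + 1) from (this m (by omega)).2
  intro k hk
  induction k, hk using Nat.le_induction with
  | base => exact hbase
  | succ k _ ih =>
    refine ⟨ih.2.le, ?_⟩
    calc P (k + 2) ≤ (k + 1) * α * (P (k + 1) + P k) := prod_range_add_two_le hα k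
      _ < (k + 1) * α * (3 * D (k + 1) + 3 * D k) :=
        mul_lt_mul_of_pos_left (by linarith [ih.1, ih.2]) (by positivity)
      _ = 3 * D (k + 2) := by rw [hD]; ring

end LowerBound

lemma conjP_singleton {n j : ℕ} (h : j ≤ n) : conjP [n] j = 1 := by
  simp [conjP, h]

lemma coloredDerangements_singleton (n : ℕ) :
    ColoredDerangements [n] = (fun σ => (fun _ => 1, σ)) '' derangements (Fin n) := by
  ext ⟨c, σ⟩
  constructor
  · rintro ⟨⟨hc, -⟩, hfix⟩
    obtain rfl : c = fun _ => 1 :=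
      funext fun i => le_antisymm ((hc i).2.trans_eq (conjP_singleton i.2)) (hc i).1
    exact ⟨σ, fun i hi => hfix i hi rfl, rfl⟩
  · rintro ⟨σ, hσ, ⟨⟩⟩
    exact ⟨⟨fun i => ⟨le_rfl, (conjP_singleton i.2).ge⟩, fun _ => rfl⟩,
      fun i hi => absurd hi (hσ i)⟩

lemma absLength_add_cycleCount {m : ℕ} {σ : Perm (Fin m)} (hσ : σ ∈ derangements (Fin m)) :
    σ.absLength + cycleCount σ = m := by
  have hfix : (univ.filter fun i => σ i = i) = ∅ := filter_eq_empty_iff.mpr fun i _ => hσ i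
  have hsupp : σ.support = univ := eq_univ_iff_forall.mpr fun i => mem_support.mpr (hσ i)
  rw [cycleCount, hfix, card_empty, add_zero, absLength_add_card_cycleType, hsupp, card_univ,
    Fintype.card_fin]

lemma dCount_singleton (n k : ℕ) :
    dCount [n] k = #{σ : derangements (Fin n) | cycleCount (σ : Perm (Fin n)) = k} := by
  have hinj : Injective fun σ : derangements (Fin n) =>
      ((fun _ => 1 : Fin n → ℕ), (σ : Perm (Fin n))) :=
    fun σ τ h => Subtype.ext (congrArg Prod.snd h)
  rw [dCount, ← Set.ncard_coe_finset, ← Set.ncard_image_of_injective _ hinj]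
  congr 1
  ext ⟨c, σ⟩
  simp only [coloredDerangements_singleton, Set.mem_ofPred_eq, coe_filter, mem_univ, true_and]
  constructor
  · rintro ⟨⟨σ, hσ, ⟨⟩⟩, hk⟩
    exact ⟨⟨σ, hσ⟩, hk, rfl⟩
  · rintro ⟨σ, hk, ⟨⟩⟩
    exact ⟨⟨σ, σ.2, rfl⟩, hk⟩

lemma JackD_singleton (α : ℝ) {n : ℕ} (hn : 1 ≤ n) :
    JackD [n] α = derangementWeight α (Fin n) := by
  have hmaps : ∀ σ : derangements (Fin n), cycleCount (σ : Perm (Fin n)) ∈ Icc 1 n := by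
    intro σ
    have hne : (σ : Perm (Fin n)) ≠ 1 := fun h => σ.2 ⟨0, hn⟩ (by rw [h]; rfl)
    have hpos : 1 ≤ cycleCount (σ : Perm (Fin n)) :=
      (card_cycleType_pos.mpr hne).trans_le (Nat.le_add_right _ _)
    have := absLength_add_cycleCount σ.2
    exact mem_Icc.mpr ⟨hpos, by omega⟩
  simp only [JackD, List.headI_cons, dCount_singleton, ← nsmul_eq_mul, ← sum_const]
  rw [sum_fiberwise_of_maps_to' (fun σ _ => hmaps σ) (fun k => α ^ (n - k)), derangementWeight]
  refine sum_congr rfl fun σ _ => ?_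
  have := absLength_add_cycleCount σ.2
  rw [show n - cycleCount (σ : Perm (Fin n)) = (σ : Perm (Fin n)).absLength by omega]

lemma prod_Icc_hook_eq_prod_range (α : ℝ) (n : ℕ) :
    ∏ i ∈ Icc 1 n, (α * ((n : ℝ) - (i : ℝ)) + 1) = ∏ j ∈ range n, ((j : ℝ) * α + 1) := by
  have h := prod_Ico_reflect (fun j : ℕ => (j : ℝ) * α + 1) 1 (le_refl (n + 1))
  rw [Nat.sub_self, Nat.add_sub_cancel, Nat.Ico_zero_eq_range] at h
  rw [← h, ← Ico_add_one_right_eq_Icc]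
  refine prod_congr rfl fun i hi => ?_
  rw [Nat.cast_sub (Nat.lt_succ_iff.mp (mem_Ico.mp hi).2)]
  ring

/-- `3 · D^{(n)}_α > Π_{i=1}^{n} (α(n − i) + 1)` for `α ≥ 1`, `n ≥ 4`. -/
theorem one_row_lower_bound (n : ℕ) (hn : 4 ≤ n) (α : ℝ) (hα : 1 ≤ α) :
    ∏ i ∈ Finset.Icc 1 n, (α * ((n : ℝ) - (i : ℝ)) + 1) < 3 * JackD [n] α := by
  rw [prod_Icc_hook_eq_prod_range, JackD_singleton α (by omega)]
  exact prod_range_lt_three_mul_derangementWeight hα hn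
end

section
/- (Two-row formula, α = 2.) For all integers n ≥ 1 and 0 ≤ k ≤ n/2, the number of colored perfect matching derangements of the two-row shape (n−k, k) satisfies |D′_{(n−k,k)}| = Σ_{i=0}^{k} C(k, i) · (2i − 1)!! · E(n − k − i), where E(m) denotes the number of perfect matchings of {1,…,2m} containing none of the pairs {2t−1, 2t} (with E(0) = 1), (2i−1)!! = 1·3·5⋯(2i−1) with (−1)!! = 1, and C(k,i) is the binomial coefficient. -/
open Finset

/-!
For the shape `(m, k)` with `k ≤ m` we have `λ′_j = 2` on the first `k` columns and `λ′_j = 1`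
elsewhere, so a colouring is the indicator of the set `S` of blocks of colour `2`, a subset of the
first `k` blocks. Since matched blocks have the same colour, the matching splits into a perfect
matching of the `2|S|` points of the blocks in `S`, which is unrestricted (`(2|S| - 1)!!` choices),
and a perfect matching of the remaining `m - |S|` blocks, which by the derangement condition
contains none of them as a pair (`E(m - |S|)` choices). Grouping the sets `S` by size gives the
binomial coefficients. The count `(2i - 1)!!` itself follows by fixing a point: its partner can
be chosen in `2i - 1` ways, and what is left is a perfect matching of `2i - 2` points.
-/

open Function Equiv

theorem card_not_ne_and_ne {α : Type*} {a b : α} (hab : a ≠ b) :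
    Nat.card {x // ¬(x ≠ a ∧ x ≠ b)} = 2 :=
  Nat.card_eq_two_iff.mpr
    ⟨⟨a, by simp⟩, ⟨b, by simp⟩, by simpa using hab, by ext ⟨x, hx⟩; simp at hx ⊢; tauto⟩

theorem ncard_setOf_fst_mem {α β : Type*} [Finite β] (s : Finset α) (P : α → β → Prop) :
    {x : α × β | x.1 ∈ s ∧ P x.1 x.2}.ncard = ∑ a ∈ s, {b | P a b}.ncard := by
  simp only [← Nat.card_coe_set_eq]
  rw [← sum_coe_sort, ← Nat.card_sigma]
  exact Nat.card_congr
    { toFun := fun x => ⟨⟨x.1.1, x.2.1⟩, ⟨x.1.2, x.2.2⟩⟩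
      invFun := fun y => ⟨(y.1.1, y.2.1), y.1.2, y.2.2⟩
      left_inv := fun _ => rfl
      right_inv := fun _ => rfl }

namespace Equiv.Perm

variable {α α' β β' : Type*}

def IsPerfectMatching (σ : Perm α) : Prop := Involutive σ ∧ ∀ x, σ x ≠ x

def AvoidsFibers (b : α → β) (σ : Perm α) : Prop := ∀ x, b (σ x) ≠ b x

theorem card_perfectMatching_avoidsFibers_congr (e : α ≃ α') {b : α → β} {b' : α' → β'}
    (he : ∀ x y, b' (e x) = b' (e y) ↔ b x = b y) :
    Nat.card {σ : Perm α // σ.IsPerfectMatching ∧ AvoidsFibers b σ} =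
      Nat.card {σ : Perm α' // σ.IsPerfectMatching ∧ AvoidsFibers b' σ} := by
  refine Nat.card_congr (e.permCongr.subtypeEquiv fun σ => ?_)
  simp only [IsPerfectMatching, AvoidsFibers, Involutive, ← e.forall_congr_right, permCongr_apply,
    symm_apply_apply, he, e.apply_eq_iff_eq, ne_eq]

theorem IsPerfectMatching.subtypePerm {p : α → Prop} {σ : Perm α} (hσ : σ.IsPerfectMatching)
    (h : ∀ x, p (σ x) ↔ p x) : (σ.subtypePerm h).IsPerfectMatching :=
  ⟨fun x => Subtype.ext (hσ.1 x), fun x hx => hσ.2 x (congrArg Subtype.val hx)⟩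

theorem IsPerfectMatching.subtypeCongr {p : α → Prop} [DecidablePred p] {τ₁ : Perm {x // p x}}
    {τ₂ : Perm {x // ¬p x}} (h₁ : τ₁.IsPerfectMatching) (h₂ : τ₂.IsPerfectMatching) :
    (τ₁.subtypeCongr τ₂).IsPerfectMatching := by
  constructor
  · intro x
    by_cases hx : p x
    · simp [subtypeCongr.left_apply _ _ hx, h₁.1 ⟨x, hx⟩]
    · simp [subtypeCongr.right_apply _ _ hx, h₂.1 ⟨x, hx⟩]
  · intro x
    by_cases hx : p x
    · simpa [subtypeCongr.left_apply _ _ hx, Subtype.ext_iff] using h₁.2 ⟨x, hx⟩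
    · simpa [subtypeCongr.right_apply _ _ hx, Subtype.ext_iff] using h₂.2 ⟨x, hx⟩

theorem card_perfectMatching_split (p : α → Prop) [DecidablePred p] (R : α → α → Prop) :
    Nat.card {σ : Perm α // σ.IsPerfectMatching ∧ (∀ x, p (σ x) ↔ p x) ∧
        ∀ x, ¬p x → R x (σ x)} =
      Nat.card {τ : Perm {x // p x} // τ.IsPerfectMatching} *
        Nat.card {τ : Perm {x // ¬p x} // τ.IsPerfectMatching ∧ ∀ x : {x // ¬p x}, R x (τ x)} := by
  rw [← Nat.card_prod]
  refine Nat.card_congr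
    { toFun := fun σ => (⟨σ.1.subtypePerm σ.2.2.1, σ.2.1.subtypePerm _⟩,
        ⟨σ.1.subtypePerm fun x => not_congr (σ.2.2.1 x), σ.2.1.subtypePerm _,
          fun x => σ.2.2.2 x x.2⟩)
      invFun := fun τ => ⟨τ.1.1.subtypeCongr τ.2.1, τ.1.2.subtypeCongr τ.2.2.1, fun x => ?_,
        fun x hx => ?_⟩
      left_inv := fun σ => ?_
      right_inv := fun τ => ?_ }
  · by_cases hx : p x
    · simpa [subtypeCongr.left_apply _ _ hx, hx] using (τ.1.1 ⟨x, hx⟩).2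
    · simpa [subtypeCongr.right_apply _ _ hx, hx] using (τ.2.1 ⟨x, hx⟩).2
  · simpa [subtypeCongr.right_apply _ _ hx] using τ.2.2.2 ⟨x, hx⟩
  · ext x
    by_cases hx : p x <;> simp [hx]
  · ext x <;> simp [subtypeCongr.left_apply_subtype, subtypeCongr.right_apply_subtype]

theorem IsPerfectMatching.eq_swap [DecidableEq α] {τ : Perm α} (hτ : τ.IsPerfectMatching)
    {x y : α} (hxy : ∀ z, z = x ∨ z = y) : τ = swap x y := by
  have hx : τ x = y := (hxy (τ x)).resolve_left (hτ.2 x)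
  have hy : τ y = x := by rw [← hx, hτ.1]
  ext z
  rcases hxy z with rfl | rfl
  · simp [hx]
  · simp [hy]

theorem card_perfectMatching_of_card_eq_two (h : Nat.card α = 2) :
    Nat.card {τ : Perm α // τ.IsPerfectMatching} = 1 := by
  classical
  obtain ⟨x, y, hxy, huniv⟩ := Nat.card_eq_two_iff.mp h
  have hxy' : ∀ z, z = x ∨ z = y := fun z => by simpa using Set.eq_univ_iff_forall.mp huniv z
  have hswap : (swap x y).IsPerfectMatching :=
    ⟨swap_apply_self x y, fun z => by rcases hxy' z with rfl | rfl <;> simp [hxy, hxy.symm]⟩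
  rw [Nat.card_eq_one_iff_unique]
  exact ⟨⟨fun τ₁ τ₂ => Subtype.ext ((τ₁.2.eq_swap hxy').trans (τ₂.2.eq_swap hxy').symm)⟩,
    ⟨⟨_, hswap⟩⟩⟩

theorem IsPerfectMatching.apply_eq_iff_forall_ne_and_ne {σ : Perm α}
    (hσ : σ.IsPerfectMatching) {a b : α} :
    σ a = b ↔ ∀ x, (σ x ≠ a ∧ σ x ≠ b) ↔ (x ≠ a ∧ x ≠ b) := by
  refine ⟨fun h x => ?_, fun h => ?_⟩
  · rw [ne_eq, ne_eq, hσ.1.eq_iff, hσ.1.eq_iff, h, ← h, hσ.1]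
    tauto
  · have := (h a).not.mpr (by simp)
    push Not at this
    exact this (hσ.2 a)

/-- `σ a = b` says that `σ` preserves `{a, b}`, whose only perfect matching is the swap. -/
theorem card_perfectMatching_apply_eq [DecidableEq α] {a b : α} (hab : a ≠ b) :
    Nat.card {σ : Perm α // σ.IsPerfectMatching ∧ σ a = b} =
      Nat.card {τ : Perm {x // x ≠ a ∧ x ≠ b} // τ.IsPerfectMatching} := by
  have hpair : Nat.card {τ : Perm {x // ¬(x ≠ a ∧ x ≠ b)} // τ.IsPerfectMatching} = 1 :=
    card_perfectMatching_of_card_eq_two (card_not_ne_and_ne hab)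
  calc Nat.card {σ : Perm α // σ.IsPerfectMatching ∧ σ a = b}
      = Nat.card {σ : Perm α // σ.IsPerfectMatching ∧
          (∀ x, (σ x ≠ a ∧ σ x ≠ b) ↔ (x ≠ a ∧ x ≠ b)) ∧ ∀ x, ¬(x ≠ a ∧ x ≠ b) → True} :=
        Nat.card_congr <| subtypeEquivRight fun σ => by
          simp only [imp_true_iff, and_true]
          exact and_congr_right fun hσ => hσ.apply_eq_iff_forall_ne_and_ne
    _ = _ := by
      rw [card_perfectMatching_split (fun x => x ≠ a ∧ x ≠ b) fun _ _ => True]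
      simp only [imp_true_iff, and_true, hpair, mul_one]

theorem card_perfectMatching_eq_sum [Fintype α] [DecidableEq α] (a : α) :
    Nat.card {σ : Perm α // σ.IsPerfectMatching} =
      ∑ b ∈ univ.erase a, Nat.card {σ : Perm α // σ.IsPerfectMatching ∧ σ a = b} := by
  have hfix : IsEmpty {σ : Perm α // σ.IsPerfectMatching ∧ σ a = a} := ⟨fun σ => σ.2.1.2 a σ.2.2⟩
  rw [← Nat.card_congr (sigmaFiberEquiv fun σ : {σ : Perm α // σ.IsPerfectMatching} => σ.1 a),
    Nat.card_sigma, ← add_sum_erase _ _ (mem_univ a)]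
  have hfiber (b : α) : Nat.card {σ : {σ : Perm α // σ.IsPerfectMatching} // σ.1 a = b} =
      Nat.card {σ : Perm α // σ.IsPerfectMatching ∧ σ a = b} :=
    Nat.card_congr (subtypeSubtypeEquivSubtypeInter _ fun σ : Perm α => σ a = b)
  simp only [hfiber, Nat.card_of_isEmpty, zero_add]

theorem card_perfectMatching [Finite α] {i : ℕ} (h : Nat.card α = 2 * i) :
    Nat.card {σ : Perm α // σ.IsPerfectMatching} = ∏ t ∈ range i, (2 * t + 1) := by
  classical
  induction i generalizing α with
  | zero =>
    have : IsEmpty α := Finite.card_eq_zero_iff.mp h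
    exact Nat.card_eq_one_iff_unique.mpr
      ⟨inferInstance, ⟨⟨1, isEmptyElim, isEmptyElim⟩⟩⟩
  | succ i ih =>
    have := Fintype.ofFinite α
    obtain ⟨a⟩ : Nonempty α := Finite.card_pos_iff.mp (by omega)
    have hfiber : ∀ b ∈ univ.erase a,
        Nat.card {σ : Perm α // σ.IsPerfectMatching ∧ σ a = b} = ∏ t ∈ range i, (2 * t + 1) := by
      intro b hb
      have hab : a ≠ b := (ne_of_mem_erase hb).symm
      rw [card_perfectMatching_apply_eq hab]
      have hsplit := Nat.card_congr (sumCompl fun x => x ≠ a ∧ x ≠ b)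
      rw [Nat.card_sum, card_not_ne_and_ne hab] at hsplit
      exact ih (by omega)
    rw [card_perfectMatching_eq_sum a, sum_congr rfl hfiber, sum_const,
      card_erase_of_mem (mem_univ a), card_univ, ← Nat.card_eq_fintype_card, h, prod_range_succ,
      smul_eq_mul, show 2 * (i + 1) - 1 = 2 * i + 1 by omega, mul_comm]

end Equiv.Perm

open Equiv.Perm

section Blocks

variable {m : ℕ}

def blockEquiv (m : ℕ) : Fin m × Fin 2 ≃ Fin (2 * m) :=
  finProdFinEquiv.trans (finCongr (Nat.mul_comm m 2))

theorem blk_blockEquiv (q : Fin m × Fin 2) : blk (blockEquiv m q) = q.1 := by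
  ext
  simp only [blk, blockEquiv, trans_apply, finProdFinEquiv_apply_val, finCongr_apply, Fin.val_cast]
  omega

theorem blk_eq_fst_blockEquiv_symm (x : Fin (2 * m)) : blk x = ((blockEquiv m).symm x).1 := by
  rw [← blk_blockEquiv, apply_symm_apply]

def blockSubtypeEquiv (P : Fin m → Prop) :
    {x : Fin (2 * m) // P (blk x)} ≃ {j // P j} × Fin 2 :=
  ((blockEquiv m).symm.subtypeEquiv fun x => by rw [blk_eq_fst_blockEquiv_symm]).trans
    prodSubtypeFstEquivSubtypeProd

theorem blockSubtypeEquiv_fst (P : Fin m → Prop) (x : {x : Fin (2 * m) // P (blk x)}) :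
    ((blockSubtypeEquiv P x).1 : Fin m) = blk x.1 :=
  (blk_eq_fst_blockEquiv_symm x.1).symm

theorem card_blk_mem (S : Finset (Fin m)) : Nat.card {x : Fin (2 * m) // blk x ∈ S} = 2 * #S := by
  rw [Nat.card_congr (blockSubtypeEquiv (· ∈ S)), Nat.card_prod]
  simp [mul_comm]

theorem ematch_eq_card (m : ℕ) :
    Ematch m = Nat.card {σ : Perm (Fin (2 * m)) // σ.IsPerfectMatching ∧ AvoidsFibers blk σ} := by
  simp only [Ematch, ← Nat.card_coe_set_eq, IsPerfectMatching, AvoidsFibers, and_assoc, ne_eq,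
    blk, Fin.ext_iff]
  rfl

theorem card_avoidsFibers_compl (S : Finset (Fin m)) :
    Nat.card {τ : Perm {x : Fin (2 * m) // blk x ∉ S} //
        τ.IsPerfectMatching ∧ AvoidsFibers (fun x => blk x.1) τ} = Ematch (m - #S) := by
  have hS : Fintype.card {j // j ∉ S} = m - #S := by simp
  rw [ematch_eq_card,
    card_perfectMatching_avoidsFibers_congr (blockSubtypeEquiv (· ∉ S)) (b' := Prod.fst)
      fun x y => by rw [Subtype.ext_iff, blockSubtypeEquiv_fst, blockSubtypeEquiv_fst],
    card_perfectMatching_avoidsFibers_congr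
      ((Fintype.equivFinOfCardEq hS).prodCongr (Equiv.refl (Fin 2))) (b' := Prod.fst)
      fun x y => (Fintype.equivFinOfCardEq hS).apply_eq_iff_eq,
    card_perfectMatching_avoidsFibers_congr (blockEquiv _) (b' := blk)
      fun x y => by rw [blk_blockEquiv, blk_blockEquiv]]

end Blocks

section TwoRow

variable {m k : ℕ}

/-- The columns `j` of the shape `(m, k)` with `λ′_j = 2`. -/
def doubleColumns (m k : ℕ) : Finset (Fin m) := univ.filter (·.1 < k)

theorem card_doubleColumns (h : k ≤ m) : #(doubleColumns m k) = k := by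
  rw [doubleColumns, Fin.card_filter_val_lt, min_eq_right h]

def twoColoring (S : Finset (Fin m)) (j : Fin m) : ℕ := if j ∈ S then 2 else 1

theorem twoColoring_injective : Injective (twoColoring (m := m)) := by
  intro S T h
  ext j
  have := congrFun h j
  simp only [twoColoring] at this
  split_ifs at this <;> simp_all

def IsTwoColoredDerangement (S : Finset (Fin m)) (σ : Perm (Fin (2 * m))) : Prop :=
  σ.IsPerfectMatching ∧ (∀ p, blk (σ p) ∈ S ↔ blk p ∈ S) ∧ ∀ p, blk p ∉ S → blk (σ p) ≠ blk p

theorem ncard_isTwoColoredDerangement (S : Finset (Fin m)) :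
    {σ | IsTwoColoredDerangement S σ}.ncard = (∏ t ∈ range #S, (2 * t + 1)) * Ematch (m - #S) := by
  rw [← Nat.card_coe_set_eq, ← card_perfectMatching (card_blk_mem S),
    ← card_avoidsFibers_compl S]
  exact card_perfectMatching_split (blk · ∈ S) fun x y => blk y ≠ blk x

theorem conjP_two_row (j : Fin m) : conjP [m, k] (j.1 + 1) = if j.1 < k then 2 else 1 := by
  by_cases h : j.1 < k <;> simp [conjP, h]

theorem twoColoring_eq_twoColoring_iff {S : Finset (Fin m)} {i j : Fin m} :
    twoColoring S i = twoColoring S j ↔ (i ∈ S ↔ j ∈ S) := by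
  unfold twoColoring
  split_ifs <;> simp_all

theorem twoColoring_ne_one_iff {S : Finset (Fin m)} {j : Fin m} : twoColoring S j ≠ 1 ↔ j ∈ S := by
  unfold twoColoring
  split_ifs <;> simp_all

theorem twoColoring_bounded_iff {S : Finset (Fin m)} :
    (∀ j, 1 ≤ twoColoring S j ∧ twoColoring S j ≤ conjP [m, k] (j.1 + 1)) ↔
      S ⊆ doubleColumns m k := by
  simp only [conjP_two_row, twoColoring, doubleColumns, subset_iff, mem_filter, mem_univ, true_and]
  refine ⟨fun h j hj => ?_, fun h j => ?_⟩
  · have := (h j).2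
    split_ifs at this <;> simp_all
  · split_ifs <;> simp_all

theorem twoColoring_mem_coloredMatchDerangements_iff (S : Finset (Fin m)) (σ : Perm (Fin (2 * m))) :
    (twoColoring S, σ) ∈ ColoredMatchDerangements [m, k] ↔
      S ⊆ doubleColumns m k ∧ IsTwoColoredDerangement S σ := by
  change ((Involutive σ ∧ (∀ p, σ p ≠ p) ∧
      (∀ j : Fin m, 1 ≤ twoColoring S j ∧ twoColoring S j ≤ conjP [m, k] (j.1 + 1)) ∧
      ∀ p, twoColoring S (blk (σ p)) = twoColoring S (blk p)) ∧
      ∀ p, blk (σ p) = blk p → twoColoring S (blk p) ≠ 1) ↔ _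
  simp only [IsTwoColoredDerangement, IsPerfectMatching, twoColoring_bounded_iff,
    twoColoring_eq_twoColoring_iff, twoColoring_ne_one_iff, ne_eq, not_imp_not]
  tauto

theorem eq_twoColoring_of_bounded {c : Fin m → ℕ}
    (hc : ∀ j : Fin m, 1 ≤ c j ∧ c j ≤ conjP [m, k] (j.1 + 1)) :
    c = twoColoring (univ.filter (c · = 2)) := by
  funext j
  have := hc j
  rw [conjP_two_row] at this
  simp only [twoColoring, mem_filter, mem_univ, true_and]
  split_ifs at this ⊢ <;> omega

theorem coloredMatchDerangements_two_row :
    ColoredMatchDerangements [m, k] = Prod.map twoColoring id ''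
      {x : Finset (Fin m) × Perm (Fin (2 * m)) |
        x.1 ∈ (doubleColumns m k).powerset ∧ IsTwoColoredDerangement x.1 x.2} := by
  ext ⟨c, σ⟩
  constructor
  · intro h
    have hc : c = twoColoring (univ.filter (c · = 2)) := eq_twoColoring_of_bounded h.1.2.2.1
    obtain ⟨hS, hσ⟩ := (twoColoring_mem_coloredMatchDerangements_iff _ σ).mp (hc ▸ h)
    exact ⟨(_, σ), ⟨mem_powerset.mpr hS, hσ⟩, Prod.ext hc.symm rfl⟩
  · rintro ⟨⟨S, σ⟩, ⟨hS, hσ⟩, h⟩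
    obtain ⟨rfl, rfl⟩ := Prod.ext_iff.mp h
    exact (twoColoring_mem_coloredMatchDerangements_iff S σ).mpr ⟨mem_powerset.mp hS, hσ⟩

theorem ncard_coloredMatchDerangements_two_row :
    (ColoredMatchDerangements [m, k]).ncard =
      ∑ S ∈ (doubleColumns m k).powerset, {σ | IsTwoColoredDerangement S σ}.ncard := by
  rw [coloredMatchDerangements_two_row]
  exact (Set.ncard_image_of_injective _ (twoColoring_injective.prodMap injective_id)).trans
    (ncard_setOf_fst_mem _ _)

end TwoRow

theorem two_row_alpha_two_general (n k : ℕ) (hk : 2 * k ≤ n) :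
    (ColoredMatchDerangements [n - k, k]).ncard =
      ∑ i ∈ Finset.range (k + 1),
        Nat.choose k i * (∏ t ∈ Finset.range i, (2 * t + 1)) * Ematch (n - k - i) := by
  rw [ncard_coloredMatchDerangements_two_row,
    sum_congr rfl fun S _ => ncard_isTwoColoredDerangement S,
    sum_powerset_apply_card (fun i => (∏ t ∈ range i, (2 * t + 1)) * Ematch (n - k - i)),
    card_doubleColumns (by omega)]
  simp only [smul_eq_mul, mul_assoc]

/-- Two-row formula, `α = 2`:
`|D′_{(n−k,k)}| = Σ_{i=0}^{k} C(k,i) · (2i−1)!! · E(n−k−i)`. -/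
theorem two_row_alpha_two (n k : ℕ) (hn : 1 ≤ n) (hk : 2 * k ≤ n) :
    (ColoredMatchDerangements [n - k, k]).ncard =
      ∑ i ∈ Finset.range (k + 1),
        Nat.choose k i * (∏ t ∈ Finset.range i, (2 * t + 1)) * Ematch (n - k - i) :=
  two_row_alpha_two_general n k hk
end
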